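/- arXiv:1909.10646 — 13 statements merged into one kernel-verified Lean document; each statement's English description precedes it below -/
import Mathlib

section
/- If X is a cut-point space, then for every x ∈ X and every connected component C of X \ {x}, the set C ∪ {x} is not compact. -/
/-!
For `p ∈ C`, removing the cut point `p` splits `X` into two open pieces; let `B p` be the
punctured piece avoiding `x`. Connectedness of `X` makes `B p ∪ {p}` connected, so `B p ⊆ C`,
and `closure (B p) ⊆ B p ∪ {p}`. Moreover `q ∈ B p` forces `B q ⊆ B p`, because the
connected piece `X \ B p` contains `x` and misses `q`. Compactness of `C ∪ {x}` and Zorn's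
lemma then give a point `m` whose `B m` is minimal among these sets, which is absurd: any
`q ∈ B m` has `B q ⊊ B m`.
-/

open Set

section

variable {X : Type*} [TopologicalSpace X]

structure IsSplitAt (p : X) (u v : Set X) : Prop where
  isOpen_left : IsOpen u
  isOpen_right : IsOpen v
  compl_subset_union : {p}ᶜ ⊆ u ∪ v
  inter_subset : u ∩ v ⊆ {p}

namespace IsSplitAt

variable {p : X} {u v : Set X}

theorem symm (h : IsSplitAt p u v) : IsSplitAt p v u :=
  ⟨h.isOpen_right, h.isOpen_left, union_comm u v ▸ h.compl_subset_union,
    inter_comm u v ▸ h.inter_subset⟩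

theorem subset_left_of_isPreconnected (h : IsSplitAt p u v) {s : Set X} (hs : IsPreconnected s)
    (hps : p ∉ s) (hsu : (s ∩ u).Nonempty) : s ⊆ u := by
  have hsuv : s ⊆ u ∪ v := fun z hz => h.compl_subset_union fun hzp => hps (hzp ▸ hz)
  intro w hw
  refine (hsuv hw).resolve_right fun hwv => ?_
  obtain ⟨z, hzs, hzuv⟩ := hs u v h.isOpen_left h.isOpen_right hsuv hsu ⟨w, hw, hwv⟩
  exact hps (h.inter_subset hzuv ▸ hzs)

theorem closure_diff_subset (h : IsSplitAt p u v) : closure (v \ {p}) ⊆ insert p (v \ {p}) := by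
  intro z hz
  by_cases hzp : z = p
  · exact Or.inl hzp
  refine Or.inr ⟨(h.compl_subset_union hzp).resolve_left fun hzu => ?_, hzp⟩
  obtain ⟨w, hwu, hwv, hwp⟩ := mem_closure_iff.mp hz u h.isOpen_left hzu
  exact hwp (h.inter_subset ⟨hwu, hwv⟩)

theorem isPreconnected_insert [PreconnectedSpace X] (h : IsSplitAt p u v) :
    IsPreconnected (insert p v) := by
  have key : ∀ s t : Set X, IsOpen s → IsOpen t → insert p v ⊆ s ∪ t →
      insert p v ∩ (s ∩ t) = ∅ → p ∈ s → insert p v ⊆ s := by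
    intro s t hs ht hcov hdisj hps
    have hvt : ∀ w ∈ v ∩ t, w ∉ s := fun w hw hws =>
      hdisj.subset ⟨Or.inr hw.1, hws, hw.2⟩
    -- A boundary point of `v ∩ t` would lie in `s` or in `u`, and both are open.
    have hclosed : IsClosed (v ∩ t) := by
      refine closure_subset_iff_isClosed.mp fun z hz => ?_
      have hzs : z ∉ s := fun hzs => by
        obtain ⟨w, hws, hw⟩ := mem_closure_iff.mp hz s hs hzs
        exact hvt w hw hws
      have hzv : z ∈ v := by
        have hzp : z ≠ p := fun hzp => hzs (hzp ▸ hps)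
        refine (h.compl_subset_union hzp).resolve_left fun hzu => ?_
        obtain ⟨w, hwu, hwv, hwt⟩ := mem_closure_iff.mp hz u h.isOpen_left hzu
        exact hvt w ⟨hwv, hwt⟩ (h.inter_subset ⟨hwu, hwv⟩ ▸ hps)
      exact ⟨hzv, (hcov (Or.inr hzv)).resolve_left hzs⟩
    have hempty : v ∩ t = ∅ := by
      by_contra hne
      have huniv := IsClopen.eq_univ ⟨hclosed, h.isOpen_right.inter ht⟩
        (nonempty_iff_ne_empty.mpr hne)
      exact hvt p (huniv ▸ mem_univ p) hps
    intro w hw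
    refine (hcov hw).resolve_right fun hwt => ?_
    rcases hw with rfl | hwv
    · exact hdisj.subset ⟨mem_insert w v, hps, hwt⟩
    · exact hempty.subset ⟨hwv, hwt⟩
  rw [isPreconnected_iff_subset_of_disjoint]
  intro s t hs ht hcov hdisj
  rcases hcov (mem_insert p v) with hps | hpt
  · exact Or.inl (key s t hs ht hcov hdisj hps)
  · exact Or.inr (key t s ht hs (union_comm s t ▸ hcov) (inter_comm s t ▸ hdisj) hpt)

theorem insert_subset_connectedComponentIn [PreconnectedSpace X] {x : X} (h : IsSplitAt p u v)
    (hxu : x ∈ u) (hxp : x ≠ p) : insert p v ⊆ connectedComponentIn {x}ᶜ p := by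
  refine h.isPreconnected_insert.subset_connectedComponentIn (mem_insert p v) ?_
  rintro w (rfl | hwv) rfl
  · exact hxp rfl
  · exact hxp (h.inter_subset ⟨hxu, hwv⟩)

theorem diff_subset_diff [PreconnectedSpace X] {x z : X} {u' v' : Set X} (h : IsSplitAt p u v)
    (h' : IsSplitAt z u' v') (hxu : x ∈ u) (hxu' : x ∈ u') (hz : z ∈ v \ {p}) :
    v' \ {z} ⊆ v \ {p} := by
  have hzu : z ∉ u := fun hzu => hz.2 (h.inter_subset ⟨hzu, hz.1⟩)
  have hsub : insert p u ⊆ u' :=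
    h'.subset_left_of_isPreconnected h.symm.isPreconnected_insert
      (fun hz' => hz'.elim hz.2 hzu) ⟨x, Or.inr hxu, hxu'⟩
  rintro w ⟨hwv', hwz⟩
  have hwp : w ≠ p := fun hwp =>
    hz.2 (h'.inter_subset ⟨hsub (mem_insert p u), hwp ▸ hwv'⟩).symm
  exact ⟨(h.compl_subset_union hwp).resolve_left fun hwu =>
    hwz (h'.inter_subset ⟨hsub (Or.inr hwu), hwv'⟩), hwp⟩

end IsSplitAt

theorem exists_isSplitAt_of_not_isPreconnected {p x : X} (h : ¬ IsPreconnected ({p}ᶜ : Set X))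
    (hx : x ≠ p) : ∃ u v, IsSplitAt p u v ∧ x ∈ u ∧ (v \ {p}).Nonempty := by
  simp only [IsPreconnected, not_forall] at h
  obtain ⟨u, v, hu, hv, hcov, ⟨a, hau⟩, ⟨b, hbv⟩, hdisj⟩ := h
  have hsplit : IsSplitAt p u v :=
    ⟨hu, hv, hcov, fun w hw => by_contra fun hwp => hdisj ⟨w, hwp, hw⟩⟩
  rcases hcov hx with hxu | hxv
  · exact ⟨u, v, hsplit, hxu, b, hbv.2, hbv.1⟩
  · exact ⟨v, u, hsplit.symm, hxv, a, hau.2, hau.1⟩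

theorem eq_empty_of_subset_isCompact_of_nested {C K : Set X} (B : X → Set X) (hK : IsCompact K)
    (hCK : C ⊆ K) (hne : ∀ p ∈ C, (B p).Nonempty) (hirrefl : ∀ p ∈ C, p ∉ B p)
    (hsub : ∀ p ∈ C, B p ⊆ C) (hcl : ∀ p ∈ C, closure (B p) ⊆ insert p (B p))
    (hnest : ∀ p ∈ C, ∀ q ∈ B p, B q ⊆ B p) : C = ∅ := by
  by_contra hC
  obtain ⟨p₀, hp₀⟩ := nonempty_iff_ne_empty.mpr hC
  let r : C → C → Prop := fun a b => (b : X) ∈ insert (a : X) (B a)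
  have hmono : ∀ {a b : C}, r a b → B b ⊆ B a := by
    rintro a b (hab | hab)
    · rw [hab]
    · exact hnest a a.2 b hab
  have htrans : ∀ {a b c : C}, r a b → r b c → r a c := by
    rintro a b c hab (hcb | hc)
    · change (c : X) ∈ insert (a : X) (B a)
      rwa [hcb]
    · exact Or.inr (hmono hab hc)
  have hbdd : ∀ c : Set C, IsChain r c → ∃ ub, ∀ a ∈ c, r a ub := by
    intro c hc
    rcases c.eq_empty_or_nonempty with rfl | ⟨a₀, ha₀⟩
    · exact ⟨⟨p₀, hp₀⟩, fun a ha => ha.elim⟩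
    -- The closed sets `closure (B a)` of the chain are nested inside `K`, so they share a point,
    -- and that point lies below every element of the chain.
    have : Nonempty c := ⟨⟨a₀, ha₀⟩⟩
    have hdir : Directed (· ⊇ ·) fun a : c => closure (B a) := by
      intro a b
      rcases eq_or_ne a b with rfl | hab
      · exact ⟨a, subset_rfl, subset_rfl⟩
      rcases hc a.2 b.2 (Subtype.coe_injective.ne hab) with h | h
      · exact ⟨b, closure_mono (hmono h), subset_rfl⟩
      · exact ⟨a, subset_rfl, closure_mono (hmono h)⟩
    obtain ⟨q, hq⟩ := IsCompact.nonempty_iInter_of_directed_nonempty_isCompact_isClosed _ hdir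
      (fun a => (hne a a.1.2).mono subset_closure)
      (fun a => hK.of_isClosed_subset isClosed_closure
        (((hcl a a.1.2).trans (insert_subset a.1.2 (hsub a a.1.2))).trans hCK))
      (fun _ => isClosed_closure)
    have hqC : q ∈ C :=
      insert_subset a₀.2 (hsub a₀ a₀.2) (hcl a₀ a₀.2 (mem_iInter.mp hq ⟨a₀, ha₀⟩))
    exact ⟨⟨q, hqC⟩, fun a ha => hcl a a.2 (mem_iInter.mp hq ⟨a, ha⟩)⟩
  obtain ⟨m, hm⟩ := exists_maximal_of_chains_bounded hbdd htrans
  obtain ⟨q, hq⟩ := hne m m.2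
  have hqm : r ⟨q, hsub m m.2 hq⟩ m := hm ⟨q, hsub m m.2 hq⟩ (Or.inr hq)
  exact hirrefl m m.2 (hqm.elim (fun e => e ▸ hq) fun hmq => hnest m m.2 q hq hmq)

end

/-- If `X` is a cut-point space, then for every `x ∈ X` and every connected component `C`
of `X \ {x}`, the set `C ∪ {x}` is not compact. -/
theorem stmt_2 {X : Type*} [TopologicalSpace X] [ConnectedSpace X]
    (hcut : ∀ x : X, ¬ IsPreconnected ({x}ᶜ : Set X))
    (x y : X) (hy : y ≠ x) :
    ¬ IsCompact (connectedComponentIn ({x}ᶜ : Set X) y ∪ {x}) := by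
  intro hK
  set C := connectedComponentIn ({x}ᶜ : Set X) y
  have hxC : ∀ p ∈ C, x ≠ p := fun p hp hxp => connectedComponentIn_subset _ _ hp hxp.symm
  choose! u v hsplit hxu hvne using fun p (hp : p ∈ C) =>
    exists_isSplitAt_of_not_isPreconnected (hcut p) (hxC p hp)
  have hvC : ∀ p ∈ C, v p \ {p} ⊆ C := fun p hp => by
    have h := (hsplit p hp).insert_subset_connectedComponentIn (hxu p hp) (hxC p hp)
    rw [← connectedComponentIn_eq hp] at h
    exact (sdiff_subset.trans (subset_insert p _)).trans h
  have hCempty : C = ∅ :=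
    eq_empty_of_subset_isCompact_of_nested (fun p => v p \ {p}) hK subset_union_left hvne
      (fun _ _ hp => hp.2 rfl) hvC (fun p hp => (hsplit p hp).closure_diff_subset)
      fun p hp q hq => (hsplit p hp).diff_subset_diff (hsplit q (hvC p hp hq)) (hxu p hp)
        (hxu q (hvC p hp hq)) hq
  exact hCempty.subset (mem_connectedComponentIn hy)
end

section
/- The one-point compactification of a locally compact (Hausdorff) cut-point space has no cut points. -/
/-!
Let `x ∈ X` and suppose `u ⊔ v` separates `X* ∖ {x}` with `∞ ∈ u`. Then `S = {x} ∪ (v ∩ X)` is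
closed in `X*` and misses `∞`, so it is a compact subset of `X`; it is also connected, being
`{x}` together with one side of a separation of `X ∖ {x}`. A compact connected T₁ space with at
least two points has a non-cut point other than any given point (take a minimal "side"
`{t} ∪ A t` by Zorn's lemma and compactness), so some `t ∈ S ∖ {x}` does not cut `S`. But then
`X ∖ {t}` is the union of the connected sets `{x} ∪ (u ∩ X)` and `S ∖ {t}`, which meet at `x`,
contradicting that `t` cuts `X`.
-/

open Set Topology

section CutSeparation

variable {Y : Type*} [TopologicalSpace Y]

/-- `A` and `B` split `{x}ᶜ` into two disjoint open pieces (either may be empty). -/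
structure IsCutSeparation (x : Y) (A B : Set Y) : Prop where
  isOpen_left : IsOpen A
  isOpen_right : IsOpen B
  disjoint : Disjoint A B
  union_eq : A ∪ B = {x}ᶜ

theorem isPreconnected_insert_of_isOpen_of_isClosed [PreconnectedSpace Y] {x : Y} {A : Set Y}
    (hA : IsOpen A) (hxA : IsClosed (insert x A)) : IsPreconnected (insert x A) := by
  have hsub_left : ∀ u v : Set Y, IsClosed u → IsClosed v → insert x A ⊆ u ∪ v → Disjoint u v →
      x ∈ u → insert x A ⊆ u := by
    intro u v hu hv hsub huv hxu
    have hclosed : A \ u = insert x A ∩ v := by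
      ext y
      constructor
      · rintro ⟨hyA, hyu⟩
        exact ⟨mem_insert_of_mem x hyA, (hsub (mem_insert_of_mem x hyA)).resolve_left hyu⟩
      · rintro ⟨rfl | hyA, hyv⟩
        · exact absurd hyv (disjoint_left.1 huv hxu)
        · exact ⟨hyA, disjoint_right.1 huv hyv⟩
    rcases isClopen_iff.1 ⟨hclosed ▸ hxA.inter hv, hA.sdiff hu⟩ with h | h
    · rintro y (rfl | hyA)
      · exact hxu
      · by_contra hyu
        exact h.subset ⟨hyA, hyu⟩
    · exact absurd (h.symm.subset (mem_univ x)).2 (not_not.2 hxu)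
  rw [isPreconnected_iff_subset_of_fully_disjoint_closed hxA]
  intro u v hu hv hsub huv
  rcases hsub (mem_insert x A) with hxu | hxv
  · exact Or.inl (hsub_left u v hu hv hsub huv hxu)
  · exact Or.inr (hsub_left v u hv hu (union_comm u v ▸ hsub) huv.symm hxv)

namespace IsCutSeparation

variable {x : Y} {A B : Set Y}

theorem symm (h : IsCutSeparation x A B) : IsCutSeparation x B A :=
  ⟨h.isOpen_right, h.isOpen_left, h.disjoint.symm, union_comm A B ▸ h.union_eq⟩

theorem notMem_left (h : IsCutSeparation x A B) : x ∉ A := fun hx =>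
  (h.union_eq ▸ mem_union_left B hx : x ∈ ({x}ᶜ : Set Y)) rfl

theorem insert_left_eq_compl (h : IsCutSeparation x A B) : insert x A = Bᶜ := by
  ext y
  rcases eq_or_ne y x with rfl | hyx
  · simpa using h.symm.notMem_left
  · have hy : y ∈ A ∪ B := h.union_eq ▸ hyx
    simp only [mem_insert_iff, hyx, false_or, mem_compl_iff]
    exact ⟨fun hyA => disjoint_left.1 h.disjoint hyA, hy.resolve_right⟩

theorem isClosed_insert_left (h : IsCutSeparation x A B) : IsClosed (insert x A) :=
  h.insert_left_eq_compl ▸ h.isOpen_right.isClosed_compl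

theorem isPreconnected_insert_left [PreconnectedSpace Y] (h : IsCutSeparation x A B) :
    IsPreconnected (insert x A) :=
  isPreconnected_insert_of_isOpen_of_isClosed h.isOpen_left h.isClosed_insert_left

theorem preimage {Z : Type*} [TopologicalSpace Z] {f : Z → Y} (hf : Continuous f)
    (hinj : Function.Injective f) {z : Z} (h : IsCutSeparation (f z) A B) :
    IsCutSeparation z (f ⁻¹' A) (f ⁻¹' B) :=
  ⟨h.isOpen_left.preimage hf, h.isOpen_right.preimage hf, h.disjoint.preimage f, by
    rw [← preimage_union, h.union_eq, preimage_compl, ← image_singleton, hinj.preimage_image]⟩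

theorem insert_subset_of_mem [PreconnectedSpace Y] {d p : Y} {A' B' : Set Y}
    (h : IsCutSeparation x A B) (hd : IsCutSeparation d A' B') (hdA : d ∈ A) (hpB : p ∈ B)
    (hpB' : p ∈ B') : insert d A' ⊆ A := by
  have hsub : insert x B ⊆ A' ∪ B' := by
    rw [h.symm.insert_left_eq_compl, hd.union_eq]
    exact compl_subset_compl.2 (singleton_subset_iff.2 hdA)
  have hB' : insert x B ⊆ B' :=
    h.symm.isPreconnected_insert_left.subset_right_of_subset_union hd.isOpen_left
      hd.isOpen_right hd.disjoint hsub ⟨p, mem_insert_of_mem x hpB, hpB'⟩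
  refine insert_subset hdA ?_
  calc A' ⊆ B'ᶜ := hd.disjoint.subset_compl_right
    _ ⊆ (insert x B)ᶜ := compl_subset_compl.2 hB'
    _ = A := by rw [h.symm.insert_left_eq_compl, compl_compl]

theorem compl_singleton_eq_union {t : Y} (h : IsCutSeparation x A B) (ht : t ∈ A) :
    {t}ᶜ = insert x B ∪ (insert x A \ {t}) := by
  have htB : t ∉ B := disjoint_left.1 h.disjoint ht
  have htx : t ≠ x := fun e => h.notMem_left (e ▸ ht)
  ext y
  rcases eq_or_ne y x with rfl | hyx
  · simp [htx.symm]
  · have hy : y ∈ A ∪ B := h.union_eq ▸ hyx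
    simp only [mem_compl_iff, mem_singleton_iff, mem_union, mem_insert_iff, hyx, false_or,
      mem_sdiff]
    grind

end IsCutSeparation

theorem exists_isCutSeparation [T1Space Y] {x p : Y} (hpx : p ≠ x)
    (h : ¬IsPreconnected ({x}ᶜ : Set Y)) :
    ∃ A B, IsCutSeparation x A B ∧ A.Nonempty ∧ p ∈ B := by
  simp only [IsPreconnected, not_forall, not_nonempty_iff_eq_empty] at h
  obtain ⟨u, v, hu, hv, hcov, ⟨a, hax, hau⟩, ⟨b, hbx, hbv⟩, huv⟩ := h
  have hsep : IsCutSeparation x ({x}ᶜ ∩ u) ({x}ᶜ ∩ v) := by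
    refine ⟨isOpen_compl_singleton.inter hu, isOpen_compl_singleton.inter hv, ?_, ?_⟩
    · exact disjoint_left.2 fun y ⟨hyx, hyu⟩ ⟨_, hyv⟩ => huv.subset ⟨hyx, hyu, hyv⟩
    · rw [← inter_union_distrib_left, inter_eq_left.2 hcov]
  rcases hsep.union_eq.symm.subset hpx with hp | hp
  · exact ⟨_, _, hsep.symm, ⟨b, hbx, hbv⟩, hp⟩
  · exact ⟨_, _, hsep, ⟨a, hax, hau⟩, hp⟩

end CutSeparation

theorem exists_minimal_mem_image_of_isClosed {S : Type*} [TopologicalSpace S] [CompactSpace S]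
    {U : Set S} {C : S → Set S} (hU : U.Nonempty) (hC : ∀ t ∈ U, IsClosed (C t))
    (hself : ∀ t ∈ U, t ∈ C t) (hCU : ∀ t ∈ U, C t ⊆ U)
    (htrans : ∀ t ∈ U, ∀ d ∈ C t, C d ⊆ C t) :
    ∃ s ∈ U, Minimal (· ∈ C '' U) (C s) := by
  have hbound : ∀ c ⊆ C '' U, IsChain (· ⊆ ·) c → c.Nonempty →
      ∃ lb ∈ C '' U, ∀ T ∈ c, lb ⊆ T := by
    rintro c hcC hchain ⟨T₀, hT₀⟩
    have hclosed : ∀ T ∈ c, IsClosed T := by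
      rintro _ hT
      obtain ⟨t, ht, rfl⟩ := hcC hT
      exact hC t ht
    have hnonempty : ∀ T ∈ c, T.Nonempty := by
      rintro _ hT
      obtain ⟨t, ht, rfl⟩ := hcC hT
      exact ⟨t, hself t ht⟩
    have : Nonempty c := ⟨⟨T₀, hT₀⟩⟩
    obtain ⟨d, hd⟩ := IsCompact.nonempty_sInter_of_directed_nonempty_isCompact_isClosed
      (IsChain.directedOn (r := fun T T' : Set S => T' ⊆ T) hchain.symm) hnonempty
      (fun T hT => (hclosed T hT).isCompact) hclosed
    have hdU : d ∈ U := by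
      obtain ⟨t, ht, rfl⟩ := hcC hT₀
      exact hCU t ht (hd _ hT₀)
    refine ⟨C d, ⟨d, hdU, rfl⟩, fun T hT => ?_⟩
    obtain ⟨t, ht, rfl⟩ := hcC hT
    exact htrans t ht d (hd _ hT)
  obtain ⟨t₀, ht₀⟩ := hU
  obtain ⟨_, -, hmin⟩ := zorn_superset_nonempty (C '' U) hbound (C t₀) ⟨t₀, ht₀, rfl⟩
  obtain ⟨s, hs, rfl⟩ := hmin.prop
  exact ⟨s, hs, hmin⟩

theorem exists_ne_isPreconnected_compl_singleton {S : Type*} [TopologicalSpace S]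
    [CompactSpace S] [T1Space S] [PreconnectedSpace S] {p q : S} (hqp : q ≠ p) :
    ∃ t ≠ p, IsPreconnected ({t}ᶜ : Set S) := by
  by_contra! hcut
  -- `A t` is the side of the cut at `t` away from `p`; since `d ∈ A t` forces `{d} ∪ A d ⊆ A t`,
  -- no set `{t} ∪ A t` can be minimal.
  choose! A B hsep hAne hpB using fun t (ht : t ≠ p) => exists_isCutSeparation ht.symm (hcut t ht)
  have hA_ne : ∀ t ≠ p, ∀ d ∈ A t, d ≠ p := fun t ht d hd hdp =>
    disjoint_left.1 (hsep t ht).disjoint (hdp ▸ hd) (hpB t ht)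
  have hA_sub : ∀ t ≠ p, ∀ d ∈ A t, insert d (A d) ⊆ A t := fun t ht d hd =>
    (hsep t ht).insert_subset_of_mem (hsep d (hA_ne t ht d hd)) hd (hpB t ht)
      (hpB d (hA_ne t ht d hd))
  obtain ⟨s, hs, hmin⟩ := exists_minimal_mem_image_of_isClosed (U := {p}ᶜ)
    (C := fun t => insert t (A t)) ⟨q, hqp⟩
    (fun t ht => (hsep t ht).isClosed_insert_left)
    (fun t _ => mem_insert t (A t))
    (fun t ht => insert_subset ht fun d hd => hA_ne t ht d hd)
    (fun t ht d hd => by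
      rcases hd with rfl | hd
      · rfl
      · exact (hA_sub t ht d hd).trans (subset_insert t (A t)))
  obtain ⟨d, hd⟩ := hAne s hs
  have hdA : insert d (A d) ⊆ A s := hA_sub s hs d hd
  have hsd : insert s (A s) ⊆ insert d (A d) :=
    hmin.2 ⟨d, hA_ne s hs d hd, rfl⟩ (hdA.trans (subset_insert s (A s)))
  exact (hsep s hs).notMem_left (hdA (hsd (mem_insert s (A s))))

theorem IsCompact.exists_isPreconnected_diff_singleton {Y : Type*} [TopologicalSpace Y]
    [T1Space Y] {S : Set Y} (hS : IsCompact S) (hSc : IsPreconnected S) {p q : Y} (hp : p ∈ S)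
    (hq : q ∈ S) (hqp : q ≠ p) : ∃ t ∈ S, t ≠ p ∧ IsPreconnected (S \ {t}) := by
  have := isCompact_iff_compactSpace.1 hS
  have := isPreconnected_iff_preconnectedSpace.1 hSc
  obtain ⟨t, htp, ht⟩ := exists_ne_isPreconnected_compl_singleton
    (p := ⟨p, hp⟩) (q := ⟨q, hq⟩) (fun h => hqp (congrArg Subtype.val h))
  refine ⟨t, t.2, fun h => htp (Subtype.ext h), ?_⟩
  simpa [image_val_compl] using IsInducing.subtypeVal.isPreconnected_image.2 ht

theorem stmt_5_general {X : Type*} [TopologicalSpace X] [T2Space X]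
    [ConnectedSpace X]
    (hcut : ∀ x : X, ¬ IsPreconnected ({x}ᶜ : Set X)) :
    ∀ y : OnePoint X, IsPreconnected ({y}ᶜ : Set (OnePoint X)) := by
  intro y
  induction y using OnePoint.rec with
  | infty =>
    rw [OnePoint.compl_infty]
    exact isPreconnected_range OnePoint.continuous_coe
  | coe x =>
    by_contra hx
    obtain ⟨A, B, hsep, hAne, hinf⟩ := exists_isCutSeparation (OnePoint.infty_ne_coe x) hx
    have hBc : Bᶜ ⊆ range ((↑) : X → OnePoint X) :=
      OnePoint.compl_infty ▸ compl_subset_compl.2 (singleton_subset_iff.2 hinf)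
    have hsepX := hsep.preimage OnePoint.continuous_coe OnePoint.coe_injective
    have hS : IsCompact (insert x (((↑) : X → OnePoint X) ⁻¹' A)) := by
      rw [hsepX.insert_left_eq_compl, ← preimage_compl,
        OnePoint.isOpenEmbedding_coe.isInducing.isCompact_preimage_iff hBc]
      exact hsep.isOpen_right.isClosed_compl.isCompact
    obtain ⟨w, hw⟩ := hAne.preimage' (hsep.disjoint.subset_compl_right.trans hBc)
    obtain ⟨t, htS, htx, ht⟩ := hS.exists_isPreconnected_diff_singleton
      hsepX.isPreconnected_insert_left (mem_insert x _) (mem_insert_of_mem x hw)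
      (fun h => hsepX.notMem_left (h ▸ hw))
    apply hcut t
    rw [hsepX.compl_singleton_eq_union (htS.resolve_left htx)]
    exact hsepX.symm.isPreconnected_insert_left.union x (mem_insert x _)
      ⟨mem_insert x _, htx.symm⟩ ht

/-- The one-point compactification of a locally compact Hausdorff cut-point space
has no cut points. -/
theorem stmt_5 {X : Type*} [TopologicalSpace X] [T2Space X] [LocallyCompactSpace X]
    [ConnectedSpace X]
    (hcut : ∀ x : X, ¬ IsPreconnected ({x}ᶜ : Set X)) :
    ∀ y : OnePoint X, IsPreconnected ({y}ᶜ : Set (OnePoint X)) :=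
  stmt_5_general hcut
end

section
/- If X is a connected Tychonoff space, then every cut point of X is a cut point of the Stone–Čech compactification βX. -/
/-!
An open set `W ⊆ βX` is the union of the closures of the two halves of any separation `U, V` of
its trace on `X`: it lies in the closure of `W ∩ X = U ∪ V` because `X` is dense, and no `p ∈ W`
is in both closures. Indeed, take `f : βX → [0, 1]` with `f p = 0` and `f = 1` off `W`; the map
equal to `f` on `U` and to `1` elsewhere on `X` is continuous, since `f = 1` on the frontier of `U`,
which misses `U ∪ V ⊇ W ∩ X`. Its extension to `βX` agrees with `f` on `cl U` and with `1` on
`cl V`, so it would equal both `0` and `1` at `p`. Hence a separation of `X \ {x}` yields one of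
`βX \ {x}`.
-/

open Set

namespace StoneCech

variable {X : Type*} [TopologicalSpace X]

theorem subset_closure_image_preimage {W : Set (StoneCech X)} (hW : IsOpen W) :
    W ⊆ closure (stoneCechUnit '' (stoneCechUnit ⁻¹' W)) := by
  rw [image_preimage_eq_inter_range]
  exact denseRange_stoneCechUnit.open_subset_closure_inter hW

theorem disjoint_closure_image_inter_closure_image {W : Set (StoneCech X)} (hW : IsOpen W)
    {U V : Set X} (hU : IsOpen U) (hV : IsOpen V) (hUV : Disjoint U V)
    (hWUV : stoneCechUnit ⁻¹' W ⊆ U ∪ V) :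
    Disjoint W (closure (stoneCechUnit '' U) ∩ closure (stoneCechUnit '' V)) := by
  classical
  refine disjoint_left.2 fun p hpW ⟨hpU, hpV⟩ => ?_
  obtain ⟨f, hf, hfp, hfW⟩ :=
    CompletelyRegularSpace.completely_regular p Wᶜ hW.isClosed_compl (not_not_intro hpW)
  set g : X → unitInterval := fun y => if y ∈ U then f (stoneCechUnit y) else 1
  have hg : Continuous g := by
    refine Continuous.if (fun y hy => ?_) (hf.comp continuous_stoneCechUnit) continuous_const
    have hyU : y ∉ U := (hU.frontier_eq ▸ hy).2
    have hyV : y ∉ V := disjoint_left.1 (hUV.closure_left hV) (frontier_subset_closure hy)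
    exact hfW fun hyW => (hWUV hyW).elim hyU hyV
  have hGU : EqOn (stoneCechExtend hg) f (closure (stoneCechUnit '' U)) := by
    refine EqOn.closure ?_ (continuous_stoneCechExtend hg) hf
    rintro _ ⟨y, hy, rfl⟩
    simp [stoneCechExtend_stoneCechUnit, g, hy]
  have hGV : EqOn (stoneCechExtend hg) 1 (closure (stoneCechUnit '' V)) := by
    refine EqOn.closure ?_ (continuous_stoneCechExtend hg) continuous_const
    rintro _ ⟨y, hy, rfl⟩
    simp [stoneCechExtend_stoneCechUnit, g, disjoint_right.1 hUV hy]
  simpa [hfp] using (hGU hpU).symm.trans (hGV hpV)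

end StoneCech

open StoneCech in
theorem IsPreconnected.preimage_stoneCechUnit {X : Type*} [TopologicalSpace X]
    {W : Set (StoneCech X)} (hW : IsPreconnected W) (hWo : IsOpen W) :
    IsPreconnected (stoneCechUnit ⁻¹' W) := by
  set S := stoneCechUnit ⁻¹' W
  have hS : IsOpen S := hWo.preimage continuous_stoneCechUnit
  rintro u v hu hv hSuv ⟨y, hyS, hyu⟩ ⟨z, hzS, hzv⟩
  by_contra huv
  have hUV : Disjoint (S ∩ u) (S ∩ v) := by
    rw [disjoint_iff_inter_eq_empty, inter_inter_inter_comm, inter_self]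
    exact not_nonempty_iff_eq_empty.1 huv
  have hcover : S ⊆ S ∩ u ∪ S ∩ v := by
    rw [← inter_union_distrib_left]
    exact subset_inter subset_rfl hSuv
  have hsep := disjoint_closure_image_inter_closure_image hWo (hS.inter hu) (hS.inter hv) hUV hcover
  have hWcover :
      W ⊆ closure (stoneCechUnit '' (S ∩ u)) ∪ closure (stoneCechUnit '' (S ∩ v)) := by
    refine (subset_closure_image_preimage hWo).trans ?_
    rw [← closure_union, ← image_union]
    exact closure_mono (image_mono hcover)
  obtain ⟨p, hpW, hp⟩ := isPreconnected_closed_iff.1 hW _ _ isClosed_closure isClosed_closure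
    hWcover ⟨_, hyS, subset_closure ⟨y, ⟨hyS, hyu⟩, rfl⟩⟩
    ⟨_, hzS, subset_closure ⟨z, ⟨hzS, hzv⟩, rfl⟩⟩
  exact disjoint_left.1 hsep hpW hp

theorem stmt_6_general {X : Type*} [TopologicalSpace X] [T35Space X]
    (x : X) (hcut : ¬ IsPreconnected ({x}ᶜ : Set X)) :
    ¬ IsPreconnected ({stoneCechUnit x}ᶜ : Set (StoneCech X)) := by
  intro h
  have hpre : stoneCechUnit ⁻¹' {stoneCechUnit x}ᶜ = ({x}ᶜ : Set X) := by
    ext y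
    simp [injective_stoneCechUnit_of_t35Space.eq_iff]
  exact hcut (hpre ▸ h.preimage_stoneCechUnit isOpen_compl_singleton)

/-- If `X` is a connected Tychonoff space, then every cut point of `X` is a cut point of
its Stone–Čech compactification `βX`. -/
theorem stmt_6 {X : Type*} [TopologicalSpace X] [T35Space X] [ConnectedSpace X]
    (x : X) (hcut : ¬ IsPreconnected ({x}ᶜ : Set X)) :
    ¬ IsPreconnected ({stoneCechUnit x}ᶜ : Set (StoneCech X)) :=
  stmt_6_general x hcut
end

section
/- Let X be a Tychonoff space, let U and V be disjoint open subsets of X, and let W be an open subset of βX such that W ∩ X = U ∪ V. Then W ∩ cl_{βX}(U) and W ∩ cl_{βX}(V) are disjoint open subsets of βX whose union is W. -/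
/-!
Suppose `p ∈ W` lies in the closures of both `U` and `V`. Since `βX` is completely regular there
is a continuous `f : βX → [0, 1]` with `f p = 0` and `f = 1` off `W`; as `W ∩ X = U ∪ V`, the
restriction of `f` to `X` is `1` off `U ∪ V`. Replacing it by `1` off `U` keeps it continuous,
because `U` and `V` are disjoint and open. The extension of this function to `βX` agrees with `f`
on `cl U` and is `1` on `cl V`, so `f p = 1`, a contradiction. The remaining claims follow since
`X ∩ W` is dense in `W`, so `W ⊆ cl U ∪ cl V`, and `W ∩ cl U = W \ cl V`.
-/

open Set

theorem continuous_piecewise_const_of_disjoint_isOpen {X Y : Type*} [TopologicalSpace X]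
    [TopologicalSpace Y] {U V : Set X} [DecidablePred (· ∈ U)] (hU : IsOpen U) (hV : IsOpen V)
    (hUV : Disjoint U V) {h : X → Y} (hh : Continuous h) {c : Y} (hc : ∀ x ∉ U ∪ V, h x = c) :
    Continuous (U.piecewise h fun _ => c) := by
  refine hh.piecewise (fun x hx => hc x ?_) continuous_const
  rw [hU.frontier_eq] at hx
  exact not_or_intro hx.2 (disjoint_left.1 (hUV.closure_left hV) hx.1)

theorem StoneCech.eqOn_closure_image_inter_of_eq_off_union {X Y : Type*} [TopologicalSpace X]
    [TopologicalSpace Y] [T2Space Y] [CompactSpace Y] {U V : Set X} (hU : IsOpen U)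
    (hV : IsOpen V) (hUV : Disjoint U V) {f : StoneCech X → Y} (hf : Continuous f) {c : Y}
    (hc : ∀ x ∉ U ∪ V, f (stoneCechUnit x) = c) :
    EqOn f (fun _ => c) (closure (stoneCechUnit '' U) ∩ closure (stoneCechUnit '' V)) := by
  classical
  have hg := continuous_piecewise_const_of_disjoint_isOpen hU hV hUV
    (hf.comp continuous_stoneCechUnit) hc
  set G := stoneCechExtend hg
  have hG : ∀ x, G (stoneCechUnit x) = U.piecewise (f ∘ stoneCechUnit) (fun _ => c) x :=
    congrFun (stoneCechExtend_extends hg)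
  have hGf : EqOn G f (closure (stoneCechUnit '' U)) := by
    refine EqOn.closure ?_ (continuous_stoneCechExtend hg) hf
    rintro _ ⟨x, hx, rfl⟩
    simp [hG, hx]
  have hGc : EqOn G (fun _ => c) (closure (stoneCechUnit '' V)) := by
    refine EqOn.closure ?_ (continuous_stoneCechExtend hg) continuous_const
    rintro _ ⟨x, hx, rfl⟩
    simp [hG, disjoint_right.1 hUV hx]
  exact fun p hp => (hGf hp.1).symm.trans (hGc hp.2)

theorem StoneCech.disjoint_inter_closure_image {X : Type*} [TopologicalSpace X] [T35Space X]
    {U V : Set X} (hU : IsOpen U) (hV : IsOpen V) (hUV : Disjoint U V)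
    {W : Set (StoneCech X)} (hW : IsOpen W)
    (hWX : W ∩ range (stoneCechUnit : X → StoneCech X) = stoneCechUnit '' (U ∪ V)) :
    Disjoint (W ∩ closure (stoneCechUnit '' U)) (W ∩ closure (stoneCechUnit '' V)) := by
  rw [disjoint_left]
  rintro p ⟨hpW, hpU⟩ ⟨-, hpV⟩
  obtain ⟨f, hf, hfp, hfW⟩ :=
    CompletelyRegularSpace.completely_regular p Wᶜ hW.isClosed_compl (not_not_intro hpW)
  have hf_off : ∀ x ∉ U ∪ V, f (stoneCechUnit x) = 1 := by
    intro x hx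
    refine hfW fun hxW => hx ?_
    obtain ⟨y, hy, hyx⟩ : stoneCechUnit x ∈ stoneCechUnit '' (U ∪ V) :=
      hWX ▸ ⟨hxW, mem_range_self x⟩
    exact injective_stoneCechUnit_of_t35Space hyx ▸ hy
  have hfp' : f p = 1 :=
    StoneCech.eqOn_closure_image_inter_of_eq_off_union hU hV hUV hf hf_off ⟨hpU, hpV⟩
  exact zero_ne_one (hfp.symm.trans hfp')

theorem StoneCech.subset_closure_image_union {X : Type*} [TopologicalSpace X]
    {U V : Set X} {W : Set (StoneCech X)} (hW : IsOpen W)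
    (hWX : W ∩ range (stoneCechUnit : X → StoneCech X) = stoneCechUnit '' (U ∪ V)) :
    W ⊆ closure (stoneCechUnit '' U) ∪ closure (stoneCechUnit '' V) := by
  have := denseRange_stoneCechUnit.open_subset_closure_inter hW
  rwa [hWX, image_union, closure_union] at this

theorem IsOpen.inter_of_isClosed_of_subset_union {X : Type*} [TopologicalSpace X]
    {W A B : Set X} (hW : IsOpen W) (hB : IsClosed B) (hWAB : W ⊆ A ∪ B)
    (hdisj : Disjoint (W ∩ A) (W ∩ B)) : IsOpen (W ∩ A) := by
  have : W ∩ A = W \ B := by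
    ext p
    constructor
    · exact fun hp => ⟨hp.1, fun hpB => disjoint_left.1 hdisj hp ⟨hp.1, hpB⟩⟩
    · exact fun hp => ⟨hp.1, (hWAB hp.1).resolve_right hp.2⟩
  rw [this]
  exact hW.sdiff hB

/-- Let `U`, `V` be disjoint open subsets of a Tychonoff space `X` and `W` an open subset
of `βX` with `W ∩ X = U ∪ V` (identifying `X` with its image in `βX`).  Then
`W ∩ cl_{βX} U` and `W ∩ cl_{βX} V` are disjoint open subsets of `βX` whose union is `W`. -/
theorem stmt_7 {X : Type*} [TopologicalSpace X] [T35Space X]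
    (U V : Set X) (hU : IsOpen U) (hV : IsOpen V) (hdisj : Disjoint U V)
    (W : Set (StoneCech X)) (hW : IsOpen W)
    (hWX : W ∩ Set.range (stoneCechUnit : X → StoneCech X) = stoneCechUnit '' (U ∪ V)) :
    Disjoint (W ∩ closure (stoneCechUnit '' U)) (W ∩ closure (stoneCechUnit '' V)) ∧
    IsOpen (W ∩ closure (stoneCechUnit '' U)) ∧
    IsOpen (W ∩ closure (stoneCechUnit '' V)) ∧
    (W ∩ closure (stoneCechUnit '' U)) ∪ (W ∩ closure (stoneCechUnit '' V)) = W := by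
  have hdis := StoneCech.disjoint_inter_closure_image hU hV hdisj hW hWX
  have hcover := StoneCech.subset_closure_image_union hW hWX
  refine ⟨hdis, hW.inter_of_isClosed_of_subset_union isClosed_closure hcover hdis,
    hW.inter_of_isClosed_of_subset_union isClosed_closure (union_comm _ _ ▸ hcover)
      hdis.symm, ?_⟩
  rw [← inter_union_distrib_left]
  exact inter_eq_left.2 hcover
end

section
/- If X is a connected weakly orderable Tychonoff space (i.e., there is a continuous injection of X into a linearly ordered compact connected Hausdorff space), then βX is an irreducible continuum: there exist points p, q ∈ βX such that the only subcontinuum of βX containing both p and q is βX itself. -/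
/-!
Let `f : X → Y` be a continuous injection into a compact linearly ordered space and let
`F : βX → Y` be its extension. Take `p` and `q` over the least and the greatest value of `F`,
chosen in `X` whenever these values are attained there. For a point `x` of `X` strictly between,
the closures in `βX` of `f ⁻¹' Iic (f x)` and `f ⁻¹' Ici (f x)` cover `βX`, contain `p` and `q`
respectively, and meet only in `x`: a function that vanishes on the first set and agrees on the
second with an Urysohn function vanishing at `x` is continuous on `X`, and its extension
separates the two closures away from `x`. Hence every subcontinuum containing `p` and `q`
contains `X`, which is dense.
-/

open Set

section StoneCech

variable {X : Type*} [TopologicalSpace X]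

theorem closure_image_stoneCechUnit_preimage_subset {Z : Type*} [TopologicalSpace Z]
    [CompactSpace Z] [T2Space Z] {g : X → Z} (hg : Continuous g) {C : Set Z} (hC : IsClosed C) :
    closure (stoneCechUnit '' (g ⁻¹' C)) ⊆ stoneCechExtend hg ⁻¹' C :=
  closure_minimal (by rintro _ ⟨t, ht, rfl⟩; simpa [stoneCechExtend_stoneCechUnit] using ht)
    (hC.preimage (continuous_stoneCechExtend hg))

theorem closure_image_stoneCechUnit_union_eq_univ {C D : Set X} (hCD : C ∪ D = univ) :
    closure (stoneCechUnit '' C) ∪ closure (stoneCechUnit '' D) = univ := by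
  rw [← closure_union, ← image_union, hCD, image_univ, denseRange_stoneCechUnit.closure_eq]

theorem closure_image_stoneCechUnit_inter_subset {C D : Set X} {x : X} (hC : IsClosed C)
    (hD : IsClosed D) (hCD : C ∪ D = univ) (hCD' : C ∩ D = {x}) :
    closure (stoneCechUnit '' C) ∩ closure (stoneCechUnit '' D) ⊆ {stoneCechUnit x} := by
  rintro z ⟨hzC, hzD⟩
  by_contra hz
  obtain ⟨Φ, hΦ, hΦx, hΦz⟩ :=
    CompletelyRegularSpace.completely_regular (stoneCechUnit x) {z} isClosed_singleton (Ne.symm hz)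
  have eq_of_mem {t : X} (htC : t ∈ C) (htD : t ∈ D) : t = x := hCD'.subset ⟨htC, htD⟩
  set ρ : X → unitInterval := Φ ∘ stoneCechUnit
  have hρ : Continuous ρ := hΦ.comp continuous_stoneCechUnit
  -- The open set `Dᶜ` lies in `C`, so the frontier of `C` lies in `C ∩ D = {x}`.
  have hfrontier : ∀ a ∈ frontier Cᶜ, ρ a = 0 := by
    intro a ha
    rw [frontier_compl, hC.frontier_eq] at ha
    have hDc : Dᶜ ⊆ interior C :=
      interior_maximal (fun t ht ↦ (hCD ▸ mem_univ t).resolve_right ht) hD.isOpen_compl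
    have haD : a ∈ D := not_not.mp fun h ↦ ha.2 (hDc h)
    simpa [eq_of_mem ha.1 haD, ρ] using hΦx
  set g := Cᶜ.indicator ρ
  have hg : Continuous g := continuous_indicator hfrontier hρ.continuousOn
  set G := stoneCechExtend hg
  have hG : Continuous G := continuous_stoneCechExtend hg
  have hGC : EqOn G 0 (closure (stoneCechUnit '' C)) := by
    refine EqOn.closure ?_ hG continuous_const
    rintro _ ⟨t, ht, rfl⟩
    simp [G, stoneCechExtend_stoneCechUnit, g, ht]
  have hGD : EqOn G Φ (closure (stoneCechUnit '' D)) := by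
    refine EqOn.closure ?_ hG hΦ
    rintro _ ⟨t, ht, rfl⟩
    by_cases htC : t ∈ C
    · simp [G, stoneCechExtend_stoneCechUnit, g, ρ, eq_of_mem htC ht, hΦx]
    · simp [G, stoneCechExtend_stoneCechUnit, g, htC, ρ]
  exact zero_ne_one ((hGC hzC).symm.trans ((hGD hzD).trans (hΦz rfl)))

theorem exists_stoneCechExtend_eq_of_injective {Y : Type*} [TopologicalSpace Y]
    [CompactSpace Y] [T2Space Y] {f : X → Y} (hf : Continuous f) (hfi : Function.Injective f)
    {a : Y} (ha : a ∈ range (stoneCechExtend hf)) :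
    ∃ p, stoneCechExtend hf p = a ∧ ∀ x, f x = a → stoneCechUnit x = p := by
  by_cases h : ∃ x, f x = a
  · obtain ⟨x₀, rfl⟩ := h
    exact ⟨stoneCechUnit x₀, stoneCechExtend_stoneCechUnit hf x₀,
      fun x hx ↦ by rw [hfi hx]⟩
  · obtain ⟨p, hp⟩ := ha
    exact ⟨p, hp, fun x hx ↦ absurd ⟨x, hx⟩ h⟩

end StoneCech

theorem stoneCechUnit_mem_of_isPreconnected {X Y : Type*} [TopologicalSpace X]
    [TopologicalSpace Y] [LinearOrder Y] [OrderTopology Y] [CompactSpace Y] {f : X → Y}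
    (hf : Continuous f) (hfi : Function.Injective f) {K : Set (StoneCech X)}
    (hKc : IsPreconnected K) {p q : StoneCech X} (hp : p ∈ K) (hq : q ∈ K)
    {x : X} (hpx : stoneCechExtend hf p < f x) (hxq : f x < stoneCechExtend hf q) :
    stoneCechUnit x ∈ K := by
  set L := closure (stoneCechUnit '' (f ⁻¹' Iic (f x)))
  set R := closure (stoneCechUnit '' (f ⁻¹' Ici (f x)))
  have hsplit : f ⁻¹' Iic (f x) ∪ f ⁻¹' Ici (f x) = univ := by
    rw [← preimage_union, Iic_union_Ici, preimage_univ]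
  have hcover : L ∪ R = univ := closure_image_stoneCechUnit_union_eq_univ hsplit
  have hmeet : L ∩ R ⊆ {stoneCechUnit x} := by
    refine closure_image_stoneCechUnit_inter_subset (isClosed_Iic.preimage hf)
      (isClosed_Ici.preimage hf) hsplit ?_
    rw [← preimage_inter, Iic_inter_Ici, Icc_self, ← image_singleton, hfi.preimage_image]
  have hpL : p ∈ L := (hcover ▸ mem_univ p).resolve_right fun h ↦
    (closure_image_stoneCechUnit_preimage_subset hf isClosed_Ici h).not_gt hpx
  have hqR : q ∈ R := (hcover ▸ mem_univ q).resolve_left fun h ↦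
    (closure_image_stoneCechUnit_preimage_subset hf isClosed_Iic h).not_gt hxq
  obtain ⟨w, hwK, hwLR⟩ := isPreconnected_closed_iff.mp hKc L R isClosed_closure isClosed_closure
    (hcover ▸ subset_univ K) ⟨p, hp, hpL⟩ ⟨q, hq, hqR⟩
  rwa [← hmeet hwLR]

theorem stmt_8_general {X : Type*} [TopologicalSpace X] [ConnectedSpace X]
    (hwo : ∃ (Y : Type) (_ : TopologicalSpace Y) (_ : LinearOrder Y),
      OrderTopology Y ∧ CompactSpace Y ∧ ConnectedSpace Y ∧ T2Space Y ∧
      ∃ f : X → Y, Continuous f ∧ Function.Injective f) :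
    ∃ p q : StoneCech X, ∀ K : Set (StoneCech X),
      IsClosed K → IsPreconnected K → p ∈ K → q ∈ K → K = Set.univ := by
  obtain ⟨Y, _, _, _, _, _, _, f, hf, hfi⟩ := hwo
  have : Nonempty (StoneCech X) := .map stoneCechUnit ConnectedSpace.toNonempty
  set F := stoneCechExtend hf
  have hF_range : IsCompact (range F) := isCompact_range (continuous_stoneCechExtend hf)
  obtain ⟨a, ha⟩ := hF_range.exists_isLeast (range_nonempty F)
  obtain ⟨b, hb⟩ := hF_range.exists_isGreatest (range_nonempty F)
  obtain ⟨p, rfl, hpx⟩ := exists_stoneCechExtend_eq_of_injective hf hfi ha.1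
  obtain ⟨q, rfl, hqx⟩ := exists_stoneCechExtend_eq_of_injective hf hfi hb.1
  refine ⟨p, q, fun K hK hKc hp hq ↦ eq_univ_of_univ_subset ?_⟩
  rw [← denseRange_stoneCechUnit.closure_eq]
  refine closure_minimal (range_subset_iff.mpr fun x ↦ ?_) hK
  have hFx : F (stoneCechUnit x) = f x := stoneCechExtend_stoneCechUnit hf x
  rcases (ha.2 ⟨_, hFx⟩).eq_or_lt with hp_eq | hp_lt
  · rwa [hpx x hp_eq.symm]
  rcases (hb.2 ⟨_, hFx⟩).eq_or_lt with hq_eq | hq_lt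
  · rwa [hqx x hq_eq]
  exact stoneCechUnit_mem_of_isPreconnected hf hfi hKc hp hq hp_lt hq_lt

/-- If `X` is a connected weakly orderable Tychonoff space (there is a continuous injection
of `X` into a compact connected linearly ordered Hausdorff space), then `βX` is an
irreducible continuum: there are `p, q ∈ βX` such that the only subcontinuum of `βX`
containing both is `βX` itself. -/
theorem stmt_8 {X : Type*} [TopologicalSpace X] [T35Space X] [ConnectedSpace X]
    (hwo : ∃ (Y : Type) (_ : TopologicalSpace Y) (_ : LinearOrder Y),
      OrderTopology Y ∧ CompactSpace Y ∧ ConnectedSpace Y ∧ T2Space Y ∧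
      ∃ f : X → Y, Continuous f ∧ Function.Injective f) :
    ∃ p q : StoneCech X, ∀ K : Set (StoneCech X),
      IsClosed K → IsPreconnected K → p ∈ K → q ∈ K → K = Set.univ :=
  stmt_8_general hwo
end

section
/- Let X be a cut-point space densely contained in a compact metrizable space Y such that Y \ X is path-connected. Then Y is a reducible continuum: for every pair of points p, q ∈ Y there is a proper subcontinuum of Y containing both. -/
/-!
Cut `X` at a point `x`: `X \ {x} = A ⊔ B` with `A`, `B` open and nonempty, and both `X \ B` and
`X \ A` are connected. Their closures in `Y` are proper subcontinua through `x` (each misses the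
other piece, since closure in `Y` traced on `X` is closure in `X`) and they cover `Y` by density.
So any pair meeting `X` lies in a proper subcontinuum. A pair in `Y \ X` is joined by a path in
`Y \ X`, whose image is a subcontinuum missing the nonempty set `X`.
-/

open Set

section CutPoint

variable {Z : Type*} [TopologicalSpace Z] {x : Z}

theorem exists_open_partition_compl_singleton [T1Space Z] (hx : ¬IsPreconnected ({x}ᶜ : Set Z)) :
    ∃ A B : Set Z, IsOpen A ∧ IsOpen B ∧ A.Nonempty ∧ B.Nonempty ∧ Disjoint A B ∧
      A ∪ B = {x}ᶜ := by
  simp only [IsPreconnected, not_forall, not_nonempty_iff_eq_empty] at hx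
  obtain ⟨u, v, hu, hv, hcover, hu_ne, hv_ne, huv⟩ := hx
  refine ⟨{x}ᶜ ∩ u, {x}ᶜ ∩ v, isOpen_compl_singleton.inter hu, isOpen_compl_singleton.inter hv,
    hu_ne, hv_ne, ?_, ?_⟩
  · rw [disjoint_iff_inter_eq_empty, ← inter_inter_distrib_left, huv]
  · rw [← inter_union_distrib_left]
    exact inter_eq_left.mpr hcover

theorem isPreconnected_compl_of_open_partition [PreconnectedSpace Z] {A B : Set Z}
    (hA : IsOpen A) (hB : IsOpen B) (hAB : Disjoint A B) (hcover : A ∪ B = {x}ᶜ) :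
    IsPreconnected Bᶜ := by
  have hxB : x ∉ B := fun h => (hcover.symm ▸ subset_union_right h : x ∈ ({x}ᶜ : Set Z)) rfl
  rw [isPreconnected_iff_subset_of_disjoint]
  intro u v hu hv hsub huv
  wlog hxu : x ∈ u generalizing u v
  · have hxv : x ∈ v := (hsub hxB).resolve_left hxu
    exact (this v u hv hu (union_comm u v ▸ hsub) (inter_comm u v ▸ huv) hxv).symm
  left
  -- `Bᶜ \ u` is clopen in `Z` since it equals the open set `A ∩ v`; it misses `x`, so it is empty.
  have hdiff : Bᶜ \ u = A ∩ v := by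
    ext z
    have hz : z ∈ A ∨ z ∈ B ↔ z ≠ x := by simpa using Set.ext_iff.mp hcover z
    have hAB' : z ∈ A → z ∉ B := fun h => disjoint_left.mp hAB h
    have hz_uv : z ∉ Bᶜ ∩ (u ∩ v) := huv ▸ notMem_empty z
    have hzx : z = x → z ∈ u := fun h => h ▸ hxu
    have hz_sub := @hsub z
    simp only [mem_sdiff, mem_inter_iff, mem_compl_iff, mem_union] at hz_sub hz_uv ⊢
    tauto
  have hclopen : IsClopen (Bᶜ \ u) := ⟨hB.isClosed_compl.sdiff hu, hdiff ▸ hA.inter hv⟩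
  rcases isClopen_iff.mp hclopen with h | h
  · exact sdiff_eq_empty.mp h
  · exact ((h ▸ mem_univ x : x ∈ Bᶜ \ u).2 hxu).elim

end CutPoint

section Subcontinuum

variable {Y : Type*} [TopologicalSpace Y] {X : Set Y}

theorem closure_image_val_ne_univ {S : Set X} (hS : IsClosed S) (hS_ne : S ≠ univ) :
    closure (Subtype.val '' S) ≠ univ := by
  obtain ⟨b, hb⟩ := (ne_univ_iff_exists_notMem S).mp hS_ne
  intro h
  have : b ∈ closure S := by
    rw [Topology.IsEmbedding.subtypeVal.closure_eq_preimage_closure_image, h]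
    trivial
  exact hb (hS.closure_eq ▸ this)

variable [CompactSpace Y]

theorem exists_proper_subcontinuum_of_mem_closure {S : Set X} (hS_closed : IsClosed S)
    (hS_conn : IsPreconnected S) (hS_ne : S ≠ univ) {p q : Y} (hp : p ∈ Subtype.val '' S)
    (hq : q ∈ closure (Subtype.val '' S)) :
    ∃ K : Set Y, IsCompact K ∧ IsPreconnected K ∧ p ∈ K ∧ q ∈ K ∧ K ≠ univ :=
  ⟨_, isClosed_closure.isCompact, (hS_conn.image _ continuous_subtype_val.continuousOn).closure,
    subset_closure hp, hq, closure_image_val_ne_univ hS_closed hS_ne⟩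

theorem exists_proper_subcontinuum_of_cutPoint [T1Space Y] (hX : Dense X) [PreconnectedSpace X]
    {x : X} (hx : ¬IsPreconnected ({x}ᶜ : Set X)) (q : Y) :
    ∃ K : Set Y, IsCompact K ∧ IsPreconnected K ∧ ↑x ∈ K ∧ q ∈ K ∧ K ≠ univ := by
  obtain ⟨A, B, hA, hB, hA_ne, hB_ne, hAB, hcover⟩ := exists_open_partition_compl_singleton hx
  have hx_mem : ∀ C : Set X, C ⊆ {x}ᶜ → ↑x ∈ Subtype.val '' Cᶜ :=
    fun C hC => ⟨x, fun hxC => hC hxC rfl, rfl⟩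
  have hST : Bᶜ ∪ Aᶜ = univ := by rw [← compl_inter, inter_comm, hAB.inter_eq, compl_empty]
  have hq : q ∈ closure (Subtype.val '' Bᶜ) ∪ closure (Subtype.val '' Aᶜ) := by
    rw [← closure_union, ← image_union, hST, image_univ, Subtype.range_coe, hX.closure_eq]
    trivial
  rcases hq with hq | hq
  · exact exists_proper_subcontinuum_of_mem_closure hB.isClosed_compl
      (isPreconnected_compl_of_open_partition hA hB hAB hcover) (compl_ne_univ.mpr hB_ne)
      (hx_mem B (hcover ▸ subset_union_right)) hq
  · exact exists_proper_subcontinuum_of_mem_closure hA.isClosed_compl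
      (isPreconnected_compl_of_open_partition hB hA hAB.symm (union_comm A B ▸ hcover))
      (compl_ne_univ.mpr hA_ne) (hx_mem A (hcover ▸ subset_union_left)) hq

end Subcontinuum

/-- Let `X` be a cut-point space densely contained in a compact metrizable space `Y`
such that `Y \ X` is path-connected.  Then `Y` is a reducible continuum: every pair of
points of `Y` lies in a proper subcontinuum of `Y`. -/
theorem stmt_10 {Y : Type*} [TopologicalSpace Y] [CompactSpace Y]
    [TopologicalSpace.MetrizableSpace Y] (X : Set Y) (hdense : Dense X)
    (hconn : ConnectedSpace X)
    (hcut : ∀ x : X, ¬ IsPreconnected (({x}ᶜ : Set X)))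
    (hrem : IsPathConnected (Xᶜ : Set Y)) :
    ∀ p q : Y, ∃ K : Set Y, IsCompact K ∧ IsPreconnected K ∧ p ∈ K ∧ q ∈ K ∧
      K ≠ Set.univ := by
  intro p q
  by_cases hp : p ∈ X
  · exact exists_proper_subcontinuum_of_cutPoint hdense (hcut ⟨p, hp⟩) q
  by_cases hq : q ∈ X
  · obtain ⟨K, hK, hK_conn, hqK, hpK, hK_ne⟩ :=
      exists_proper_subcontinuum_of_cutPoint hdense (hcut ⟨q, hq⟩) p
    exact ⟨K, hK, hK_conn, hpK, hqK, hK_ne⟩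
  obtain ⟨γ, hγ⟩ := hrem.joinedIn p hp q hq
  obtain ⟨x, hx⟩ := hconn.toNonempty
  refine ⟨range γ, isCompact_range γ.continuous, isPreconnected_range γ.continuous,
    ⟨0, γ.source⟩, ⟨1, γ.target⟩, fun h => ?_⟩
  obtain ⟨t, ht⟩ := h.symm ▸ mem_univ (x : Y)
  exact hγ t (ht ▸ hx)
end

section
/- Every nonempty open subset of a (nondegenerate Hausdorff) continuum has cardinality at least the continuum (𝔠 = |ℝ|). -/
/-!
Pick `x ∈ U` and `y ≠ x`. Urysohn's lemma gives a continuous `f : X → ℝ` with `f x = 0` and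
`f = 1` on the closed set `Uᶜ ∪ {y}`. The range of `f` is connected, so it contains `[0, 1]`, and
every point sent into `[0, 1)` lies in `U`. Hence `f '' U ⊇ [0, 1)`, a set of cardinality `𝔠`.
-/

open Set Cardinal

theorem Ico_zero_one_subset_image_compl {X : Type*} [TopologicalSpace X] [PreconnectedSpace X]
    {f : X → ℝ} (hf : Continuous f) {x : X} (hx : f x = 0) {T : Set X} (hT : T.Nonempty)
    (hfT : EqOn f 1 T) : Ico 0 1 ⊆ f '' Tᶜ := by
  obtain ⟨y, hy⟩ := hT
  intro t ht
  obtain ⟨z, rfl⟩ := (isPreconnected_range hf).Icc_subset ⟨x, hx⟩ ⟨y, hfT hy⟩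
    (Ico_subset_Icc_self ht)
  exact ⟨z, fun hz => ht.2.ne (hfT hz), rfl⟩

theorem continuum_le_mk_of_isOpen {X : Type*} [TopologicalSpace X] [T4Space X]
    [PreconnectedSpace X] [Nontrivial X] {U : Set X} (hU : IsOpen U) (hne : U.Nonempty) :
    𝔠 ≤ #U := by
  obtain ⟨x, hx⟩ := hne
  obtain ⟨y, hyx⟩ := exists_ne x
  have hxT : x ∉ Uᶜ ∪ {y} := by simp [hx, hyx.symm]
  obtain ⟨f, hfx, hfT, -⟩ := exists_continuous_zero_one_of_isClosed isClosed_singleton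
    (hU.isClosed_compl.union isClosed_singleton) (disjoint_singleton_left.mpr hxT)
  have hIco : Ico 0 1 ⊆ f '' U :=
    (Ico_zero_one_subset_image_compl f.continuous (hfx rfl) ⟨y, Or.inr rfl⟩ hfT).trans
      (image_mono fun z hz => by_contra fun hzU => hz (Or.inl hzU))
  calc 𝔠 = lift.{_, 0} #(Ico (0 : ℝ) 1) := by rw [mk_Ico_real one_pos, lift_continuum]
    _ ≤ lift.{_, 0} #(f '' U) := lift_le.mpr (mk_le_mk_of_subset hIco)
    _ ≤ #U := by simpa using mk_image_le_lift (f := f) (s := U)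

/-- Every nonempty open subset of a nondegenerate Hausdorff continuum has cardinality at
least the continuum. -/
theorem stmt_11 {X : Type*} [TopologicalSpace X] [CompactSpace X] [T2Space X]
    [ConnectedSpace X] [Nontrivial X]
    (U : Set X) (hU : IsOpen U) (hne : U.Nonempty) :
    Cardinal.continuum ≤ Cardinal.mk U :=
  continuum_le_mk_of_isOpen hU hne
end

section
/- Let D be a compact connected Hausdorff space, and suppose for every point x in a dense subset S of D the complement D \ {x} is disconnected, witnessed by D \ {x} = Uₓ ⊔ Vₓ with Uₓ, Vₓ open. Suppose D is separable. If K ⊆ L are nondegenerate subcontinua of D and K contains uncountably many points x ∈ S that are cut points of D, then K contains a cut point of L. -/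
open Set

/-- If the whole space is preconnected and `{x}ᶜ = U ⊔ V` with `U, V` open disjoint,
then `V ∪ {x}` is preconnected. -/
lemma aux_side_conn {D : Type*} [TopologicalSpace D]
    (hD : IsPreconnected (Set.univ : Set D)) {x : D} {U V : Set D}
    (hU : IsOpen U) (hV : IsOpen V) (hdisj : U ∩ V = ∅) (hcov : U ∪ V = {x}ᶜ) :
    IsPreconnected (V ∪ {x}) := by
  have key : ∀ p q : Set D, IsOpen p → IsOpen q → (V ∪ {x}) ⊆ p ∪ q → x ∈ p →
      ((V ∪ {x}) ∩ q).Nonempty → ((V ∪ {x}) ∩ (p ∩ q)).Nonempty := by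
    intro p q hp hq hcov' hxp hqne
    by_cases hxq : x ∈ q
    · exact ⟨x, Or.inr rfl, hxp, hxq⟩
    by_contra hempty
    have hEmpty : (V ∪ {x}) ∩ (p ∩ q) = ∅ := not_nonempty_iff_eq_empty.mp hempty
    -- Q := V ∩ q is nonempty
    obtain ⟨z, hzVx, hzq⟩ := hqne
    have hzV : z ∈ V := by
      rcases hzVx with h | h
      · exact h
      · exact absurd (h ▸ hzq) hxq
    have hpQ : p ∩ (V ∩ q) = ∅ := by
      ext w
      simp only [mem_inter_iff, mem_empty_iff_false, iff_false]
      rintro ⟨hwp, hwV, hwq⟩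
      have hmem : w ∈ (V ∪ {x}) ∩ (p ∩ q) := ⟨Or.inl hwV, hwp, hwq⟩
      rw [hEmpty] at hmem; exact hmem.elim
    -- apply preconnectedness of univ to opens (V ∩ q) and (U ∪ p)
    have h1 : IsOpen (V ∩ q) := hV.inter hq
    have h2 : IsOpen (U ∪ p) := hU.union hp
    have hcovu : (Set.univ : Set D) ⊆ (V ∩ q) ∪ (U ∪ p) := by
      intro w _
      by_cases hwx : w = x
      · exact Or.inr (Or.inr (hwx ▸ hxp))
      have hw : w ∈ U ∪ V := by rw [hcov]; exact hwx
      rcases hw with hwU | hwV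
      · exact Or.inr (Or.inl hwU)
      rcases hcov' (Or.inl hwV) with hwp | hwq
      · exact Or.inr (Or.inr hwp)
      · exact Or.inl ⟨hwV, hwq⟩
    have hd : (Set.univ : Set D) ∩ ((V ∩ q) ∩ (U ∪ p)) = ∅ := by
      ext w
      simp only [mem_inter_iff, mem_empty_iff_false, iff_false, mem_univ, true_and]
      rintro ⟨⟨hwV, hwq⟩, hwUp⟩
      rcases hwUp with hwU | hwp
      · have : w ∈ U ∩ V := ⟨hwU, hwV⟩
        rw [hdisj] at this; exact this.elim
      · have : w ∈ p ∩ (V ∩ q) := ⟨hwp, hwV, hwq⟩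
        rw [hpQ] at this; exact this.elim
    obtain ⟨w, _, hw⟩ := hD (V ∩ q) (U ∪ p) h1 h2 hcovu
      ⟨z, trivial, hzV, hzq⟩ ⟨x, trivial, Or.inr hxp⟩
    have : w ∈ (∅ : Set D) := hd ▸ (show w ∈ Set.univ ∩ ((V ∩ q) ∩ (U ∪ p)) from ⟨trivial, hw⟩)
    exact this.elim
  intro p q hp hq hcov' hpne hqne
  rcases hcov' (Or.inr rfl) with hxp | hxq
  · exact key p q hp hq hcov' hxp hqne
  · have := key q p hq hp (fun w hw => (hcov' hw).symm) hxq hpne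
    rwa [inter_comm p q]

/-- Let `D` be a separable compact connected Hausdorff space with a dense set `S` of cut
points.  If `K ⊆ L` are nondegenerate subcontinua of `D` and `K` contains uncountably many
points of `S` that are cut points of `D`, then `K` contains a cut point of `L`. -/
theorem stmt_12 {D : Type*} [TopologicalSpace D] [CompactSpace D] [T2Space D]
    [ConnectedSpace D] [TopologicalSpace.SeparableSpace D]
    (S : Set D) (hS : Dense S)
    (hScut : ∀ x ∈ S, ¬ IsPreconnected ({x}ᶜ : Set D))
    (K L : Set D) (hKcl : IsClosed K) (hKco : IsPreconnected K)
    (hLcl : IsClosed L) (hLco : IsPreconnected L) (hKL : K ⊆ L)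
    (hKnd : ∃ a ∈ K, ∃ b ∈ K, a ≠ b) (hLnd : ∃ a ∈ L, ∃ b ∈ L, a ≠ b)
    (hunc : ¬ ({x ∈ K | x ∈ S ∧ ¬ IsPreconnected ({x}ᶜ : Set D)}).Countable) :
    ∃ c ∈ K, ¬ IsPreconnected (L \ {c}) := by
  by_contra hcon
  push_neg at hcon
  have hDconn : IsPreconnected (Set.univ : Set D) :=
    isPreconnected_univ
  set T : Set D := {x ∈ K | x ∈ S ∧ ¬ IsPreconnected ({x}ᶜ : Set D)} with hT
  -- For each x ∈ T produce a "free side" V_x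
  have main : ∀ x ∈ T, ∃ U V : Set D, IsOpen U ∧ IsOpen V ∧ U ∩ V = ∅ ∧
      U ∪ V = {x}ᶜ ∧ V.Nonempty ∧ L \ {x} ⊆ U ∧ IsPreconnected (V ∪ {x}) := by
    rintro x ⟨hxK, _, hxcut⟩
    rw [IsPreconnected] at hxcut
    push_neg at hxcut
    obtain ⟨u, v, hu, hv, hcov, hune, hvne, hempty⟩ := hxcut
    -- replace u, v by u \ {x}, v \ {x}
    set U' : Set D := u \ {x} with hU'
    set V' : Set D := v \ {x} with hV'
    have hU'o : IsOpen U' := hu.sdiff isClosed_singleton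
    have hV'o : IsOpen V' := hv.sdiff isClosed_singleton
    have hcov' : U' ∪ V' = {x}ᶜ := by
      ext w
      simp only [hU', hV', mem_union, mem_diff, mem_singleton_iff, mem_compl_iff]
      constructor
      · rintro (⟨_, h⟩ | ⟨_, h⟩) <;> exact h
      · intro hw
        rcases hcov hw with h | h
        · exact Or.inl ⟨h, hw⟩
        · exact Or.inr ⟨h, hw⟩
    have hdisj' : U' ∩ V' = ∅ := by
      ext w
      simp only [hU', hV', mem_inter_iff, mem_diff, mem_singleton_iff, mem_empty_iff_false,
        iff_false]
      rintro ⟨⟨hwu, hwx⟩, hwv, _⟩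
      have : w ∈ ({x}ᶜ : Set D) ∩ (u ∩ v) := ⟨hwx, hwu, hwv⟩
      rw [hempty] at this; exact this.elim
    have hU'ne : U'.Nonempty := by
      obtain ⟨w, hw1, hw2⟩ := hune; exact ⟨w, hw2, hw1⟩
    have hV'ne : V'.Nonempty := by
      obtain ⟨w, hw1, hw2⟩ := hvne; exact ⟨w, hw2, hw1⟩
    -- L \ {x} is preconnected, nonempty, contained in U' ⊔ V'
    have hLx : IsPreconnected (L \ {x}) := hcon x hxK
    have hLxne : (L \ {x}).Nonempty := by
      obtain ⟨a, ha, b, hb, hab⟩ := hLnd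
      by_cases hax : a = x
      · exact ⟨b, hb, by subst hax; exact fun h => hab (h.symm)⟩
      · exact ⟨a, ha, hax⟩
    have hLsub : L \ {x} ⊆ U' ∪ V' := by
      rw [hcov']; intro w hw; exact hw.2
    have hside : L \ {x} ⊆ U' ∨ L \ {x} ⊆ V' := by
      by_contra hnot
      push_neg at hnot
      obtain ⟨hn1, hn2⟩ := hnot
      rw [not_subset] at hn1 hn2
      obtain ⟨a, haL, haU⟩ := hn1
      obtain ⟨b, hbL, hbV⟩ := hn2
      have haV : a ∈ V' := (hLsub haL).resolve_left haU
      have hbU : b ∈ U' := (hLsub hbL).resolve_right hbV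
      obtain ⟨w, _, hw⟩ := hLx U' V' hU'o hV'o hLsub ⟨b, hbL, hbU⟩ ⟨a, haL, haV⟩
      rw [hdisj'] at hw; exact hw.elim
    rcases hside with h | h
    · exact ⟨U', V', hU'o, hV'o, hdisj', hcov', hV'ne, h,
        aux_side_conn hDconn hU'o hV'o hdisj' hcov'⟩
    · exact ⟨V', U', hV'o, hU'o, by rw [inter_comm]; exact hdisj',
        by rw [union_comm]; exact hcov', hU'ne, h,
        aux_side_conn hDconn hV'o hU'o (by rw [inter_comm]; exact hdisj')
          (by rw [union_comm]; exact hcov')⟩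
  choose! Ux Vx hUo hVo hdisj hcov hVne hLU hWconn using main
  -- the V_x are pairwise disjoint
  have hVL : ∀ x ∈ T, Vx x ∩ L = ∅ := by
    intro x hx
    ext w
    simp only [mem_inter_iff, mem_empty_iff_false, iff_false]
    rintro ⟨hwV, hwL⟩
    have hwx : w ≠ x := by
      intro h
      have : w ∈ ({x}ᶜ : Set D) := by rw [← hcov x hx]; exact Or.inr hwV
      exact this (h ▸ rfl)
    have : w ∈ Ux x := hLU x hx ⟨hwL, hwx⟩
    have : w ∈ Ux x ∩ Vx x := ⟨this, hwV⟩
    rw [hdisj x hx] at this; exact this.elim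
  have hpd : ∀ x ∈ T, ∀ y ∈ T, x ≠ y → Vx x ∩ Vx y = ∅ := by
    intro x hx y hy hxy
    by_contra hne
    rw [← Ne, ← nonempty_iff_ne_empty] at hne
    obtain ⟨z, hzx, hzy⟩ := hne
    -- W := Vx x ∪ {x} is preconnected, inside {y}ᶜ = Ux y ⊔ Vx y, meets both sides
    have hWsub : Vx x ∪ {x} ⊆ Ux y ∪ Vx y := by
      rw [hcov y hy]
      rintro w (hwV | hwx)
      · intro h
        have : w ∈ Vx x ∩ L := ⟨hwV, h ▸ hKL hy.1⟩
        rw [hVL x hx] at this; exact this.elim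
      · simp only [mem_singleton_iff] at hwx
        subst hwx; exact fun h => hxy h
    have hxU : x ∈ Ux y := hLU y hy ⟨hKL hx.1, hxy⟩
    obtain ⟨w, _, hw⟩ := hWconn x hx (Ux y) (Vx y) (hUo y hy) (hVo y hy) hWsub
      ⟨x, Or.inr rfl, hxU⟩ ⟨z, Or.inl hzx, hzy⟩
    rw [hdisj y hy] at hw; exact hw.elim
  -- pick a point of the countable dense set in each V_x
  obtain ⟨Q, hQc, hQd⟩ := TopologicalSpace.exists_countable_dense D
  have hpick : ∀ x ∈ T, ∃ q ∈ Q, q ∈ Vx x := by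
    intro x hx
    obtain ⟨q, hq1, hq2⟩ := hQd.inter_open_nonempty (Vx x) (hVo x hx) (hVne x hx)
    exact ⟨q, hq2, hq1⟩
  choose! g hgQ hgV using hpick
  have : T.Countable := by
    refine Set.MapsTo.countable_of_injOn (t := Q) (f := g) (fun x hx => hgQ x hx) ?_ hQc
    intro x hx y hy hxy
    by_contra hne
    have : g x ∈ Vx x ∩ Vx y := ⟨hgV x hx, hxy ▸ hgV y hy⟩
    rw [hpd x hx y hy hne] at this
    exact this.elim
  exact hunc this
end

section
/- Let X be a connected locally compact Hausdorff space and let γX be a compactification of X such that disjoint closed subsets of X with compact boundaries have disjoint closures in γX. Then every cut point of X is a cut point of γX. -/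
/-!
Write `X \ {x} = U ∪ V` with `U`, `V` disjoint, open and nonempty; then `P = Vᶜ` and `Q = Uᶜ`
are closed, cover `X` and meet exactly in `x`. Their closures in `γX` cover `γX`, and a point
they share lies in `X` only if it is `x`. A shared point outside `X` avoids the compact image of a
compact neighbourhood `K` of `x`, so it lies in the closures of both `P \ int K` and `Q \ int K`.
These are disjoint closed sets with boundaries inside `K`, so the hypothesis on `γX` rules this
out.
-/

open Set Topology

theorem not_isPreconnected_compl_singleton_iff {Y : Type*} [TopologicalSpace Y] [T1Space Y]
    (p : Y) :
    ¬ IsPreconnected ({p}ᶜ : Set Y) ↔ ∃ C D : Set Y, IsClosed C ∧ IsClosed D ∧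
      C ∪ D = univ ∧ C ∩ D = {p} ∧ (C \ D).Nonempty ∧ (D \ C).Nonempty := by
  constructor
  · intro h
    simp only [IsPreconnected, not_forall, not_nonempty_iff_eq_empty] at h
    obtain ⟨u, v, hu, hv, hcover, ⟨a, hap, hau⟩, ⟨b, hbp, hbv⟩, huv⟩ := h
    have hsplit : ∀ z, (¬z = p → z ∈ u ∨ z ∈ v) ∧ ¬(¬z = p ∧ z ∈ u ∧ z ∈ v) := fun z =>
      ⟨fun hz => hcover hz, fun hz => (huv ▸ hz : z ∈ (∅ : Set Y))⟩
    refine ⟨({p}ᶜ ∩ v)ᶜ, ({p}ᶜ ∩ u)ᶜ, (isOpen_compl_singleton.inter hv).isClosed_compl,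
      (isOpen_compl_singleton.inter hu).isClosed_compl, ext fun z => ?_, ext fun z => ?_,
      ⟨a, ?_⟩, ⟨b, ?_⟩⟩
    all_goals simp only [mem_union, mem_inter_iff, mem_sdiff, mem_compl_iff, mem_singleton_iff,
      mem_univ] at hap hbp ⊢
    · have := hsplit z; tauto
    · have := hsplit z; tauto
    · have := hsplit a; tauto
    · have := hsplit b; tauto
  · rintro ⟨C, D, hC, hD, hcover, hCD, ⟨a, haC, haD⟩, ⟨b, hbD, hbC⟩⟩ h
    have hpCD : p ∈ C ∩ D := hCD ▸ rfl
    obtain ⟨z, hzp, hzCD⟩ := isPreconnected_closed_iff.1 h C D hC hD (hcover ▸ subset_univ _)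
      ⟨a, fun hap => haD (hap ▸ hpCD.2), haC⟩ ⟨b, fun hbp => hbC (hbp ▸ hpCD.1), hbD⟩
    exact hzp (hCD ▸ hzCD)

theorem frontier_subset_inter_of_union_eq_univ {X : Type*} [TopologicalSpace X] {P Q : Set X}
    (hP : IsClosed P) (hQ : IsClosed Q) (hPQ : P ∪ Q = univ) : frontier P ⊆ P ∩ Q := by
  rw [frontier_eq_closure_inter_closure, hP.closure_eq]
  refine inter_subset_inter_right P (closure_minimal (fun z hz => ?_) hQ)
  exact ((hPQ ▸ mem_univ z : z ∈ P ∪ Q)).resolve_left hz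

theorem frontier_diff_interior_subset {X : Type*} [TopologicalSpace X] {K : Set X}
    (hK : IsClosed K) (s : Set X) : frontier (s \ interior K) ⊆ frontier s ∪ K := by
  refine (frontier_inter_subset s (interior K)ᶜ).trans (union_subset_union inter_subset_left ?_)
  rw [frontier_compl]
  exact inter_subset_right.trans <|
    frontier_subset_closure.trans (closure_minimal interior_subset hK)

theorem isCompact_frontier_diff_interior {X : Type*} [TopologicalSpace X] [T2Space X]
    {P Q K : Set X} (hP : IsClosed P) (hQ : IsClosed Q) (hPQ : P ∪ Q = univ) (hK : IsCompact K)
    (hPQK : P ∩ Q ⊆ K) : IsCompact (frontier (P \ interior K)) :=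
  hK.of_isClosed_subset isClosed_frontier <| (frontier_diff_interior_subset hK.isClosed P).trans <|
    union_subset ((frontier_subset_inter_of_union_eq_univ hP hQ hPQ).trans hPQK) subset_rfl

theorem closure_image_subset_closure_image_diff_interior_union {X Y : Type*} [TopologicalSpace X]
    [TopologicalSpace Y] [T2Space Y] {e : X → Y} (he : Continuous e) {K : Set X}
    (hK : IsCompact K) (s : Set X) :
    closure (e '' s) ⊆ closure (e '' (s \ interior K)) ∪ e '' K := by
  have hs : s ⊆ (s \ interior K) ∪ K := fun z hz =>
    (em (z ∈ K)).elim Or.inr fun hzK => Or.inl ⟨hz, fun h => hzK (interior_subset h)⟩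
  calc closure (e '' s)
      ⊆ closure (e '' (s \ interior K) ∪ e '' K) := by
        rw [← image_union]; exact closure_mono (image_mono hs)
    _ = closure (e '' (s \ interior K)) ∪ e '' K := by
        rw [closure_union, (hK.image he).isClosed.closure_eq]

theorem Topology.IsEmbedding.mem_of_mem_closure_image {X Y : Type*} [TopologicalSpace X]
    [TopologicalSpace Y] {e : X → Y} (he : IsEmbedding e) {s : Set X} (hs : IsClosed s) {z : X}
    (hz : e z ∈ closure (e '' s)) : z ∈ s := by
  rwa [← hs.closure_eq, he.closure_eq_preimage_closure_image]

theorem closure_image_inter_closure_image_eq_singleton {X Y : Type*} [TopologicalSpace X]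
    [T2Space X] [LocallyCompactSpace X] [TopologicalSpace Y] [T2Space Y] {e : X → Y}
    (he : IsEmbedding e)
    (hsep : ∀ A B : Set X, IsClosed A → IsClosed B → Disjoint A B →
      IsCompact (frontier A) → IsCompact (frontier B) →
      Disjoint (closure (e '' A)) (closure (e '' B)))
    {P Q : Set X} (hP : IsClosed P) (hQ : IsClosed Q) (hcover : P ∪ Q = univ) {x : X}
    (hPQ : P ∩ Q = {x}) :
    closure (e '' P) ∩ closure (e '' Q) = {e x} := by
  have hxPQ : x ∈ P ∩ Q := hPQ ▸ rfl
  refine Subset.antisymm (fun y ⟨hyP, hyQ⟩ => ?_) (singleton_subset_iff.2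
    ⟨subset_closure (mem_image_of_mem e hxPQ.1), subset_closure (mem_image_of_mem e hxPQ.2)⟩)
  by_cases hy : y ∈ range e
  · obtain ⟨z, rfl⟩ := hy
    have hz : z ∈ P ∩ Q :=
      ⟨he.mem_of_mem_closure_image hP hyP, he.mem_of_mem_closure_image hQ hyQ⟩
    rw [hPQ, mem_singleton_iff] at hz
    rw [hz, mem_singleton_iff]
  obtain ⟨K, hK, hxK⟩ := exists_compact_mem_nhds x
  have hPQK : P ∩ Q ⊆ interior K :=
    hPQ ▸ singleton_subset_iff.2 (mem_interior_iff_mem_nhds.2 hxK)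
  have hfar : Disjoint (closure (e '' (P \ interior K))) (closure (e '' (Q \ interior K))) :=
    hsep _ _ (hP.sdiff isOpen_interior) (hQ.sdiff isOpen_interior)
      (disjoint_left.2 fun z ⟨hzP, hzK⟩ ⟨hzQ, _⟩ => hzK (hPQK ⟨hzP, hzQ⟩))
      (isCompact_frontier_diff_interior hP hQ hcover hK (hPQK.trans interior_subset))
      (isCompact_frontier_diff_interior hQ hP (union_comm P Q ▸ hcover) hK
        (inter_comm P Q ▸ hPQK.trans interior_subset))
  have hnear : y ∉ e '' K := fun ⟨z, _, hz⟩ => hy ⟨z, hz⟩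
  have hyfar : ∀ S : Set X, y ∈ closure (e '' S) → y ∈ closure (e '' (S \ interior K)) :=
    fun S hyS => (closure_image_subset_closure_image_diff_interior_union he.continuous hK S
      hyS).resolve_right hnear
  exact (disjoint_left.1 hfar (hyfar P hyP) (hyfar Q hyQ)).elim

theorem stmt_13_general {X Y : Type*} [TopologicalSpace X] [T2Space X] [LocallyCompactSpace X]
    [TopologicalSpace Y] [T2Space Y]
    (e : X → Y) (he : Topology.IsEmbedding e) (hdense : Dense (Set.range e))
    (hsep : ∀ A B : Set X, IsClosed A → IsClosed B → Disjoint A B →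
      IsCompact (frontier A) → IsCompact (frontier B) →
      Disjoint (closure (e '' A)) (closure (e '' B)))
    (x : X) (hcut : ¬ IsPreconnected ({x}ᶜ : Set X)) :
    ¬ IsPreconnected ({e x}ᶜ : Set Y) := by
  obtain ⟨P, Q, hP, hQ, hcover, hPQ, ⟨a, haP, haQ⟩, ⟨b, hbQ, hbP⟩⟩ :=
    (not_isPreconnected_compl_singleton_iff x).1 hcut
  refine (not_isPreconnected_compl_singleton_iff (e x)).2 ⟨closure (e '' P), closure (e '' Q),
    isClosed_closure, isClosed_closure, ?_,
    closure_image_inter_closure_image_eq_singleton he hsep hP hQ hcover hPQ,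
    ⟨e a, subset_closure (mem_image_of_mem e haP), mt (he.mem_of_mem_closure_image hQ) haQ⟩,
    ⟨e b, subset_closure (mem_image_of_mem e hbQ), mt (he.mem_of_mem_closure_image hP) hbP⟩⟩
  rw [← closure_union, ← image_union, hcover, image_univ, hdense.closure_eq]

/-- Let `X` be a connected locally compact Hausdorff space and `γX` a compactification of
`X` in which disjoint closed subsets of `X` with compact boundaries have disjoint closures.
Then every cut point of `X` is a cut point of `γX`. -/
theorem stmt_13 {X Y : Type*} [TopologicalSpace X] [T2Space X] [LocallyCompactSpace X]
    [ConnectedSpace X] [TopologicalSpace Y] [CompactSpace Y] [T2Space Y]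
    (e : X → Y) (he : Topology.IsEmbedding e) (hdense : Dense (Set.range e))
    (hsep : ∀ A B : Set X, IsClosed A → IsClosed B → Disjoint A B →
      IsCompact (frontier A) → IsCompact (frontier B) →
      Disjoint (closure (e '' A)) (closure (e '' B)))
    (x : X) (hcut : ¬ IsPreconnected ({x}ᶜ : Set X)) :
    ¬ IsPreconnected ({e x}ᶜ : Set Y) :=
  stmt_13_general e he hdense hsep x hcut
end

section
/- Every separable Hausdorff continuum with only countably many non-cut points is a dendrite (i.e., a metrizable compact connected space in which every two distinct points are separated by a third point, equivalently a locally connected metrizable continuum containing no simple closed curve). -/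
/-!
Separation. Let `L` be a minimal subcontinuum containing `a` and `b`. If no point separates `a`
from `b`, then every `x ∈ L` other than `a`, `b` and the non-cut points cuts `X` with all of `L` on
one side. Every side of a cut point contains a non-cut point (Zorn's lemma applied to the nested far
sides), so the other side yields a non-cut point `p x`; these other sides are pairwise disjoint, so
`p` is injective and `L` is countable, which is impossible for a nondegenerate continuum.

Metrizability. Fix a countable dense set `D`. Between two points `x ≠ y` there is a chain of five
cut points, and it lets one pick two points of `D` near each end so that every cut point separating
the two pairs also separates `x` from `y`. Choosing one such splitting for each pair of finite subsets
of `D` gives a countable family of open sets that separates points; the topology it generates is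
Hausdorff and coarser than the compact topology of `X`, hence equal to it, so `X` is second
countable.
-/

open Set TopologicalSpace

section

variable {X : Type*} [TopologicalSpace X]

/-- `c` is a cut point of `X` with sides `U` and `V`. -/
structure IsCutSplit (c : X) (U V : Set X) : Prop where
  isOpen_left : IsOpen U
  isOpen_right : IsOpen V
  disjoint : Disjoint U V
  union_eq : U ∪ V = {c}ᶜ
  nonempty_left : U.Nonempty
  nonempty_right : V.Nonempty

namespace IsCutSplit

variable {c c₁ x : X} {U V U₁ V₁ S K : Set X}

theorem symm (h : IsCutSplit c U V) : IsCutSplit c V U :=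
  ⟨h.isOpen_right, h.isOpen_left, h.disjoint.symm, union_comm U V ▸ h.union_eq,
    h.nonempty_right, h.nonempty_left⟩

theorem notMem_left (h : IsCutSplit c U V) : c ∉ U := fun hc =>
  (h.union_eq ▸ mem_union_left V hc : c ∈ ({c}ᶜ : Set X)) rfl

theorem mem_or (h : IsCutSplit c U V) (hx : x ≠ c) : x ∈ U ∨ x ∈ V :=
  (h.union_eq.symm ▸ hx : x ∈ U ∪ V)

theorem union_singleton_eq_compl (h : IsCutSplit c U V) : U ∪ {c} = Vᶜ := by
  ext x
  by_cases hxc : x = c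
  · subst hxc
    simp [h.symm.notMem_left]
  · have hUV := h.mem_or hxc
    have hnUV := h.disjoint.notMem_of_mem_left (a := x)
    simp only [mem_union, mem_singleton_iff, hxc, or_false, mem_compl_iff]
    tauto

theorem isClosed_side (h : IsCutSplit c U V) : IsClosed (U ∪ {c}) :=
  h.union_singleton_eq_compl ▸ h.isOpen_right.isClosed_compl

theorem isPreconnected_inter_side (h : IsCutSplit c U V) (hK : IsPreconnected K)
    (hc : c ∈ K) : IsPreconnected (K ∩ (U ∪ {c})) := by
  intro u v hu hv hcover hu' hv'
  by_contra huv
  wlog hcu : c ∈ u generalizing u v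
  · refine this v u hv hu (union_comm u v ▸ hcover) hv' hu' (by rwa [inter_comm v u]) ?_
    exact (hcover ⟨hc, Or.inr rfl⟩).resolve_left hcu
  have hcover' : K ⊆ (u ∪ V) ∪ (v ∩ U) := by
    intro t htK
    by_cases htc : t = c
    · exact Or.inl (Or.inl (htc ▸ hcu))
    rcases h.mem_or htc with htU | htV
    · rcases hcover ⟨htK, Or.inl htU⟩ with htu | htv
      exacts [Or.inl (Or.inl htu), Or.inr ⟨htv, htU⟩]
    · exact Or.inl (Or.inr htV)
  obtain ⟨t, ⟨htK, htc | htc⟩, htv⟩ := hv'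
  · obtain ⟨s, hsK, hsu | hsV, hsv, hsU⟩ :=
      hK _ _ (hu.union h.isOpen_right) (hv.inter h.isOpen_left) hcover' ⟨c, hc, Or.inl hcu⟩
        ⟨t, htK, htv, htc⟩
    · exact huv ⟨s, ⟨hsK, Or.inl hsU⟩, hsu, hsv⟩
    · exact h.disjoint.ne_of_mem hsU hsV rfl
  · exact huv ⟨c, ⟨hc, Or.inr rfl⟩, hcu, (mem_singleton_iff.mp htc) ▸ htv⟩

theorem notMem_side_of_mem_right (h : IsCutSplit c U V) (hx : x ∈ V) : x ∉ U ∪ {c} := by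
  rw [h.union_singleton_eq_compl]
  exact not_not_intro hx

theorem subset_left_of_isPreconnected (h : IsCutSplit c U V) (hS : IsPreconnected S)
    (hcS : c ∉ S) (hxS : x ∈ S) (hxU : x ∈ U) : S ⊆ U := by
  refine hS.subset_left_of_subset_union h.isOpen_left h.isOpen_right h.disjoint ?_ ⟨x, hxS, hxU⟩
  rw [h.union_eq]
  exact fun y hy hyc => hcS (mem_singleton_iff.mp hyc ▸ hy)

theorem mem_closure_left [ConnectedSpace X] (h : IsCutSplit c U V) : c ∈ closure U := by
  by_contra hc
  have hclosed : IsClosed U := by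
    refine closure_subset_iff_isClosed.mp fun x hx => ?_
    refine (h.isClosed_side.closure_subset_iff.mpr subset_union_left hx).resolve_right ?_
    exact fun hxc => hc (mem_singleton_iff.mp hxc ▸ hx)
  rcases isClopen_iff.mp ⟨hclosed, h.isOpen_left⟩ with hU | hU
  · exact h.nonempty_left.ne_empty hU
  · obtain ⟨v, hv⟩ := h.nonempty_right
    exact h.disjoint.ne_of_mem (hU ▸ mem_univ v) hv rfl

variable [ConnectedSpace X]

theorem isPreconnected_side (h : IsCutSplit c U V) : IsPreconnected (U ∪ {c}) := by
  simpa using h.isPreconnected_inter_side isPreconnected_univ (mem_univ c)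

theorem union_singleton_subset (h : IsCutSplit c U V) (h₁ : IsCutSplit c₁ U₁ V₁) (hc₁ : c₁ ∈ U)
    (hc : c ∈ V₁) : V ∪ {c} ⊆ V₁ :=
  h₁.symm.subset_left_of_isPreconnected h.symm.isPreconnected_side
    (h.symm.notMem_side_of_mem_right hc₁) (Or.inr rfl) hc

theorem nested (h : IsCutSplit c U V) (h₁ : IsCutSplit c₁ U₁ V₁) (hxU : x ∈ U) (hxU₁ : x ∈ U₁)
    (hc : c ∈ V₁) : U₁ ∪ {c₁} ⊆ U ∧ V ∪ {c} ⊆ V₁ := by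
  have hU₁ : U₁ ∪ {c₁} ⊆ U := h.subset_left_of_isPreconnected h₁.isPreconnected_side
    (h₁.notMem_side_of_mem_right hc) (Or.inl hxU₁) hxU
  exact ⟨hU₁, h.union_singleton_subset h₁ (hU₁ (Or.inr rfl)) hc⟩

end IsCutSplit

theorem exists_isCutSplit_mem_left_of_not_isPreconnected [T1Space X] {x a : X}
    (hx : ¬IsPreconnected ({x}ᶜ : Set X)) (ha : a ≠ x) : ∃ U V, IsCutSplit x U V ∧ a ∈ U := by
  simp only [IsPreconnected, not_forall, exists_prop] at hx
  obtain ⟨u, v, hu, hv, hcover, hu', hv', huv⟩ := hx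
  have h : IsCutSplit x ({x}ᶜ ∩ u) ({x}ᶜ ∩ v) := by
    refine ⟨isOpen_compl_singleton.inter hu, isOpen_compl_singleton.inter hv, ?_, ?_, hu', hv'⟩
    · rw [disjoint_iff_inter_eq_empty, ← inter_inter_distrib_left, ← not_nonempty_iff_eq_empty]
      exact huv
    · rw [← inter_union_distrib_left, inter_eq_left.mpr hcover]
  rcases h.mem_or ha with haU | haV
  exacts [⟨_, _, h, haU⟩, ⟨_, _, h.symm, haV⟩]

theorem IsPreconnected.sInter_directed [T2Space X] {S : Set (Set X)}
    (hS : DirectedOn (· ⊇ ·) S) (hne : S.Nonempty) (hcpt : ∀ s ∈ S, IsCompact s)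
    (hpc : ∀ s ∈ S, IsPreconnected s) : IsPreconnected (⋂₀ S) := by
  have hT : IsClosed (⋂₀ S) := isClosed_sInter fun s hs => (hcpt s hs).isClosed
  obtain ⟨s₀, hs₀⟩ := hne
  have hTcpt : IsCompact (⋂₀ S) := (hcpt s₀ hs₀).of_isClosed_subset hT (sInter_subset_of_mem hs₀)
  rw [isPreconnected_iff_subset_of_fully_disjoint_closed hT]
  intro a b ha hb hab hdisj
  obtain ⟨u, v, hu, hv, hau, hbv, huv⟩ := SeparatedNhds.of_isCompact_isCompact
    (hTcpt.inter_left ha) (hTcpt.inter_left hb) (hdisj.mono inter_subset_left inter_subset_left)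
  have hTuv : ⋂₀ S ⊆ u ∪ v := fun x hx =>
    (hab hx).imp (fun hxa => hau ⟨hxa, hx⟩) (fun hxb => hbv ⟨hxb, hx⟩)
  have : Nonempty S := ⟨⟨s₀, hs₀⟩⟩
  obtain ⟨⟨s, hs⟩, hsuv⟩ := exists_subset_nhds_of_isCompact' hS.directed_val
    (fun s => hcpt s s.2) (fun s => (hcpt s s.2).isClosed)
    (fun x hx => (hu.union hv).mem_nhds (hTuv (sInter_eq_iInter ▸ hx)))
  rcases (hpc s hs).subset_or_subset hu hv huv hsuv with hsu | hsv
  · refine Or.inl fun x hx => (hab hx).resolve_right fun hxb => ?_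
    exact huv.ne_of_mem (hsu (hx s hs)) (hbv ⟨hxb, hx⟩) rfl
  · refine Or.inr fun x hx => (hab hx).resolve_left fun hxa => ?_
    exact huv.ne_of_mem (hau ⟨hxa, hx⟩) (hsv (hx s hs)) rfl

theorem IsCutSplit.exists_isPreconnected_compl_singleton [CompactSpace X] [T2Space X]
    [ConnectedSpace X] {c : X} {U V : Set X} (h : IsCutSplit c U V) :
    ∃ z ∈ U, IsPreconnected ({z}ᶜ : Set X) := by
  by_contra! hcut
  -- `B z` is the side of the cut point `z` away from `c`.
  choose! A B hAB hcA using fun z (hz : z ∈ U) =>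
    exists_isCutSplit_mem_left_of_not_isPreconnected (hcut z hz)
      (ne_of_mem_of_not_mem hz h.notMem_left).symm
  have hBU : ∀ z ∈ U, B z ∪ {z} ⊆ U := by
    intro z hz t ht
    have htV : t ∉ V ∪ {c} := fun htV => (hAB z hz).symm.notMem_side_of_mem_right
      (h.union_singleton_subset (hAB z hz).symm hz (hcA z hz) htV) ht
    exact (h.mem_or fun htc => htV (Or.inr htc)).resolve_right fun htV' => htV (Or.inl htV')
  have hnest : ∀ z ∈ U, ∀ t ∈ B z, B t ∪ {t} ⊆ B z := fun z hz t ht =>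
    have htU := hBU z hz (Or.inl ht)
    ((hAB t htU).nested (hAB z hz) (hcA t htU) (hcA z hz) ht).2
  have hchain : ∀ C ⊆ (fun z => B z ∪ {z}) '' U, IsChain (· ⊆ ·) C → C.Nonempty →
      ∃ lb ∈ (fun z => B z ∪ {z}) '' U, ∀ s ∈ C, lb ⊆ s := by
    rintro C hC hC' ⟨s₀, hs₀⟩
    have : Nonempty C := ⟨⟨s₀, hs₀⟩⟩
    obtain ⟨t, ht⟩ := IsCompact.nonempty_sInter_of_directed_nonempty_isCompact_isClosed
      (show IsChain (· ⊇ ·) C from hC'.symm).directedOn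
      (fun s hs => by obtain ⟨z, -, rfl⟩ := hC hs; exact ⟨z, Or.inr rfl⟩)
      (fun s hs => by obtain ⟨z, hz, rfl⟩ := hC hs; exact (hAB z hz).symm.isClosed_side.isCompact)
      (fun s hs => by obtain ⟨z, hz, rfl⟩ := hC hs; exact (hAB z hz).symm.isClosed_side)
    obtain ⟨z₀, hz₀, rfl⟩ := hC hs₀
    refine ⟨B t ∪ {t}, mem_image_of_mem _ (hBU z₀ hz₀ (ht _ hs₀)), ?_⟩
    rintro _ hs
    obtain ⟨z, hz, rfl⟩ := hC hs
    rcases ht _ hs with htB | rfl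
    · exact (hnest z hz t htB).trans subset_union_left
    · exact subset_rfl
  -- A minimal far side `B m ∪ {m}` would contain the smaller far side of any `w ∈ B m`.
  obtain ⟨z₀, hz₀⟩ := h.nonempty_left
  obtain ⟨M, -, hM⟩ := zorn_superset_nonempty _ hchain _ (mem_image_of_mem _ hz₀)
  obtain ⟨m, hm, rfl⟩ := hM.prop
  obtain ⟨w, hw⟩ := (hAB m hm).nonempty_right
  have hMw := hM.le_of_le (mem_image_of_mem _ (hBU m hm (Or.inl hw)))
    ((hnest m hm w hw).trans subset_union_left)
  exact (hAB m hm).symm.notMem_left (hnest m hm w hw (hMw (Or.inr rfl)))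

theorem IsPreconnected.subsingleton_of_countable [T35Space X] {s : Set X}
    (hs : IsPreconnected s) (hc : s.Countable) : s.Subsingleton := by
  have := hc.totallySeparatedSpace
  exact totallyDisconnectedSpace_subtype_iff.mp inferInstance s subset_rfl hs

theorem exists_minimal_isClosed_isPreconnected [CompactSpace X] [T2Space X] [ConnectedSpace X]
    (a b : X) : ∃ L, Minimal (fun K : Set X => IsClosed K ∧ IsPreconnected K ∧ a ∈ K ∧ b ∈ K) L := by
  obtain ⟨L, -, hL⟩ := zorn_superset_nonempty
    {K : Set X | IsClosed K ∧ IsPreconnected K ∧ a ∈ K ∧ b ∈ K} (fun C hC hC' hne =>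
      ⟨⋂₀ C, ⟨isClosed_sInter fun s hs => (hC hs).1,
        IsPreconnected.sInter_directed (show IsChain (· ⊇ ·) C from hC'.symm).directedOn hne
          (fun s hs => (hC hs).1.isCompact) (fun s hs => (hC hs).2.1),
        mem_sInter.2 fun s hs => (hC hs).2.2.1, mem_sInter.2 fun s hs => (hC hs).2.2.2⟩,
      fun _ hs => sInter_subset_of_mem hs⟩)
    univ ⟨isClosed_univ, isPreconnected_univ, trivial, trivial⟩
  exact ⟨L, hL⟩

theorem IsCutSplit.subset_side_of_minimal {x a b : X} {U V L : Set X}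
    (hL : Minimal (fun K : Set X => IsClosed K ∧ IsPreconnected K ∧ a ∈ K ∧ b ∈ K) L)
    (h : IsCutSplit x U V) (hxL : x ∈ L) (ha : a ∈ U) (hb : b ∈ U) : L ⊆ U ∪ {x} :=
  (hL.le_of_le ⟨hL.prop.1.inter h.isClosed_side, h.isPreconnected_inter_side hL.prop.2.1 hxL,
    ⟨hL.prop.2.2.1, Or.inl ha⟩, ⟨hL.prop.2.2.2, Or.inl hb⟩⟩ inter_subset_left).trans
    inter_subset_right

theorem exists_isCutSplit_of_countable [CompactSpace X] [T2Space X] [ConnectedSpace X]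
    (hcount : {x : X | IsPreconnected ({x}ᶜ : Set X)}.Countable) {a b : X} (hab : a ≠ b) :
    ∃ c U V, IsCutSplit c U V ∧ a ∈ U ∧ b ∈ V := by
  by_contra! hno
  obtain ⟨L, hL⟩ := exists_minimal_isClosed_isPreconnected a b
  set N := {x : X | IsPreconnected ({x}ᶜ : Set X)}
  have hcut : ∀ x ∈ L \ ({a, b} ∪ N), ∃ U V, IsCutSplit x U V ∧ L ⊆ U ∪ {x} := by
    rintro x ⟨hxL, hx⟩
    simp only [mem_union, mem_insert_iff, mem_singleton_iff, not_or] at hx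
    obtain ⟨⟨hxa, hxb⟩, hxN⟩ := hx
    obtain ⟨U, V, h, haU⟩ := exists_isCutSplit_mem_left_of_not_isPreconnected hxN (Ne.symm hxa)
    have hbU : b ∈ U := (h.mem_or (Ne.symm hxb)).resolve_right (hno x U V h haU)
    exact ⟨U, V, h, h.subset_side_of_minimal hL hxL haU hbU⟩
  choose! U V hUV hLU using hcut
  choose! p hpV hpN using fun x hx => (hUV x hx).symm.exists_isPreconnected_compl_singleton
  have hinj : InjOn p (L \ ({a, b} ∪ N)) := by
    intro x hx y hy hpxy
    by_contra hxy
    have hyU : y ∈ U x := (hLU x hx hy.1).resolve_right (Ne.symm hxy)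
    have hxU : x ∈ U y := (hLU y hy hx.1).resolve_right hxy
    have hVU := (hUV x hx).union_singleton_subset (hUV y hy).symm hyU hxU
    exact (hUV y hy).disjoint.ne_of_mem (hVU (Or.inl (hpV x hx))) (hpxy ▸ hpV y hy) rfl
  have hLc : L.Countable := by
    refine ((((countable_singleton b).insert a).union hcount).union
      (MapsTo.countable_of_injOn (fun x hx => hpN x hx) hinj hcount)).mono ?_
    rw [union_sdiff_self]
    exact subset_union_right
  exact hab (hL.prop.2.1.subsingleton_of_countable hLc hL.prop.2.2.1 hL.prop.2.2.2)

theorem secondCountableTopology_of_countable_separating [CompactSpace X] [T2Space X]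
    {F : Set (Set X)} (hFc : F.Countable) (hFo : ∀ s ∈ F, IsOpen s)
    (hsep : Pairwise fun x y => ∃ U ∈ F, ∃ V ∈ F, x ∈ U ∧ y ∈ V ∧ Disjoint U V) :
    SecondCountableTopology X := by
  have hT2 : @T2Space X (generateFrom F) := @T2Space.mk _ (generateFrom F) fun x y hxy => by
    obtain ⟨U, hU, V, hV, hxU, hyV, hUV⟩ := hsep hxy
    exact ⟨U, V, isOpen_generateFrom_of_mem hU, isOpen_generateFrom_of_mem hV, hxU, hyV, hUV⟩
  have hcont : @Continuous X X _ (generateFrom F) id := continuous_generateFrom_iff.2 hFo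
  -- `id : X → (X, generateFrom F)` is a continuous map from a compact to a Hausdorff space.
  refine ⟨⟨F, hFc, le_antisymm (le_generateFrom hFo) fun s hs => ?_⟩⟩
  have := @Continuous.isClosedMap X X _ (generateFrom F) _ hT2 id hcont _ hs.isClosed_compl
  rwa [image_id, @isClosed_compl_iff] at this

theorem IsCutSplit.exists_nested [ConnectedSpace X]
    (hsep : ∀ a b : X, a ≠ b → ∃ c U V, IsCutSplit c U V ∧ a ∈ U ∧ b ∈ V)
    {c x : X} {U V : Set X} (h : IsCutSplit c U V) (hx : x ∈ U) :
    ∃ c₁ U₁ V₁, IsCutSplit c₁ U₁ V₁ ∧ x ∈ U₁ ∧ U₁ ∪ {c₁} ⊆ U ∧ V ∪ {c} ⊆ V₁ := by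
  obtain ⟨c₁, U₁, V₁, h₁, hxU₁, hcV₁⟩ := hsep x c (ne_of_mem_of_not_mem hx h.notMem_left)
  exact ⟨c₁, U₁, V₁, h₁, hxU₁, h.nested h₁ hx hxU₁ hcV₁⟩

theorem exists_finite_subsets_forcing_sides [ConnectedSpace X]
    (hsep : ∀ a b : X, a ≠ b → ∃ c U V, IsCutSplit c U V ∧ a ∈ U ∧ b ∈ V)
    {D : Set X} (hD : Dense D) {x y : X} (hxy : x ≠ y) :
    ∃ A B : Set X, A.Finite ∧ A ⊆ D ∧ B.Finite ∧ B ⊆ D ∧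
      (∃ c U V, IsCutSplit c U V ∧ A ⊆ U ∧ B ⊆ V) ∧
      ∀ e P Q, IsCutSplit e P Q → A ⊆ P → B ⊆ Q → x ∈ P ∧ y ∈ Q := by
  obtain ⟨c, U, V, h, hxU, hyV⟩ := hsep x y hxy
  obtain ⟨c₁, U₁, V₁, h₁, hxU₁, hU₁, hV₁⟩ := h.exists_nested hsep hxU
  obtain ⟨c₀, U₀, _, h₀, hxU₀, hU₀, -⟩ := h₁.exists_nested hsep hxU₁
  obtain ⟨c₂, V₂, U₂, h₂, hyV₂, hV₂, hU₂⟩ := h.symm.exists_nested hsep hyV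
  obtain ⟨c₃, V₃, _, h₃, hyV₃, hV₃, -⟩ := h₂.exists_nested hsep hyV₂
  obtain ⟨n, hnU₀, hnD⟩ := hD.inter_open_nonempty U₀ h₀.isOpen_left ⟨x, hxU₀⟩
  obtain ⟨n', hn'V₃, hn'D⟩ := hD.inter_open_nonempty V₃ h₃.isOpen_left ⟨y, hyV₃⟩
  obtain ⟨d, ⟨hdV₁, hdU⟩, hdD⟩ := hD.inter_open_nonempty _ (h₁.isOpen_right.inter h.isOpen_left)
    (mem_closure_iff.mp h.mem_closure_left V₁ h₁.isOpen_right (hV₁ (Or.inr rfl)))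
  obtain ⟨d', ⟨hd'U₂, hd'V⟩, hd'D⟩ := hD.inter_open_nonempty _
    (h₂.isOpen_right.inter h.isOpen_right)
    (mem_closure_iff.mp h.symm.mem_closure_left U₂ h₂.isOpen_right (hU₂ (Or.inr rfl)))
  refine ⟨{n, d}, {n', d'}, toFinite _, insert_subset hnD (singleton_subset_iff.2 hdD),
    toFinite _, insert_subset hn'D (singleton_subset_iff.2 hd'D),
    ⟨c, U, V, h, insert_subset (hU₁ (Or.inl (hU₀ (Or.inl hnU₀)))) (singleton_subset_iff.2 hdU),
      insert_subset (hV₂ (Or.inl (hV₃ (Or.inl hn'V₃)))) (singleton_subset_iff.2 hd'V)⟩, ?_⟩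
  -- `e` separates `d` from `d'`, which keeps it strictly between `c₁` and `c₂`.
  intro e P Q hE hnd hnd'
  have hdd' : ∀ S, IsPreconnected S → e ∉ S → d ∈ S → d' ∉ S := fun S hS heS hdS hd'S =>
    hE.disjoint.ne_of_mem (hE.subset_left_of_isPreconnected hS heS hdS (hnd (by simp)) hd'S)
      (hnd' (by simp)) rfl
  have heU₁ : e ∉ U₁ := fun he => hdd' _ h₁.symm.isPreconnected_side
    (h₁.symm.notMem_side_of_mem_right he) (Or.inl hdV₁) (Or.inl (hV₁ (Or.inl hd'V)))
  have heV₂ : e ∉ V₂ := fun he => hdd' _ h₂.symm.isPreconnected_side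
    (h₂.symm.notMem_side_of_mem_right he) (Or.inl (hU₂ (Or.inl hdU))) (Or.inl hd'U₂)
  exact ⟨hE.subset_left_of_isPreconnected h₀.isPreconnected_side (fun he => heU₁ (hU₀ he))
      (Or.inl hnU₀) (hnd (by simp)) (Or.inl hxU₀),
    hE.symm.subset_left_of_isPreconnected h₃.isPreconnected_side (fun he => heV₂ (hV₃ he))
      (Or.inl hn'V₃) (hnd' (by simp)) (Or.inl hyV₃)⟩

theorem metrizableSpace_of_forall_isCutSplit [CompactSpace X] [T2Space X] [ConnectedSpace X]
    [SeparableSpace X] (hsep : ∀ a b : X, a ≠ b → ∃ c U V, IsCutSplit c U V ∧ a ∈ U ∧ b ∈ V) :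
    MetrizableSpace X := by
  obtain ⟨D, hDc, hD⟩ := exists_countable_dense X
  set I := {AB : Set X × Set X | AB.1.Finite ∧ AB.1 ⊆ D ∧ AB.2.Finite ∧ AB.2 ⊆ D ∧
    ∃ c U V, IsCutSplit c U V ∧ AB.1 ⊆ U ∧ AB.2 ⊆ V}
  have hIc : I.Countable := by
    refine Countable.mono ?_
      ((countable_ofPred_finite_subset hDc).prod (countable_ofPred_finite_subset hDc))
    rintro ⟨A, B⟩ ⟨hA, hAD, hB, hBD, -⟩
    exact ⟨⟨hA, hAD⟩, hB, hBD⟩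
  choose! c U V hUV hAU hBV using fun AB (hAB : AB ∈ I) => hAB.2.2.2.2
  have : SecondCountableTopology X := by
    refine secondCountableTopology_of_countable_separating ((hIc.image U).union (hIc.image V))
      ?_ fun x y hxy => ?_
    · rintro _ (⟨AB, hAB, rfl⟩ | ⟨AB, hAB, rfl⟩)
      exacts [(hUV AB hAB).isOpen_left, (hUV AB hAB).isOpen_right]
    obtain ⟨A, B, hA, hAD, hB, hBD, hex, hforce⟩ := exists_finite_subsets_forcing_sides hsep hD hxy
    have hAB : (A, B) ∈ I := ⟨hA, hAD, hB, hBD, hex⟩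
    obtain ⟨hx, hy⟩ := hforce _ _ _ (hUV _ hAB) (hAU _ hAB) (hBV _ hAB)
    exact ⟨U (A, B), Or.inl (mem_image_of_mem _ hAB), V (A, B), Or.inr (mem_image_of_mem _ hAB),
      hx, hy, (hUV _ hAB).disjoint⟩
  exact metrizableSpace_of_t3_secondCountable X

end

/-- Every separable Hausdorff continuum with only countably many non-cut points is a
dendrite: it is metrizable and any two distinct points are separated by a third point. -/
theorem stmt_15 {X : Type*} [TopologicalSpace X] [CompactSpace X] [T2Space X]
    [ConnectedSpace X] [TopologicalSpace.SeparableSpace X]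
    (hcount : ({x : X | IsPreconnected ({x}ᶜ : Set X)}).Countable) :
    TopologicalSpace.MetrizableSpace X ∧
      ∀ a b : X, a ≠ b → ∃ c : X, ∃ U V : Set X, IsOpen U ∧ IsOpen V ∧ Disjoint U V ∧
        U ∪ V = ({c}ᶜ : Set X) ∧ a ∈ U ∧ b ∈ V := by
  have hsep : ∀ a b : X, a ≠ b → ∃ c U V, IsCutSplit c U V ∧ a ∈ U ∧ b ∈ V :=
    fun a b hab => exists_isCutSplit_of_countable hcount hab
  refine ⟨metrizableSpace_of_forall_isCutSplit hsep, fun a b hab => ?_⟩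
  obtain ⟨c, U, V, h, ha, hb⟩ := hsep a b hab
  exact ⟨c, U, V, h.isOpen_left, h.isOpen_right, h.disjoint, h.union_eq, ha, hb⟩
end

section
/- Let X be a connected topological space, x a point of X, and C a connected component of X \ {x}. Then X \ C is connected, and the closure of C in X equals either C or C ∪ {x}. -/
/-!
Adding a point of `closure C ∩ F` to a component `C` of `F` keeps it preconnected, so
`closure C ⊆ C ∪ Fᶜ`; for `F = {x}ᶜ` this leaves only the point `x` to decide.

For the complement, let `A` be connected and `C` a component of `Aᶜ`, and split `Cᶜ` into two
relatively clopen pieces with `A` in the first. The second piece `B` misses `A`, and `C ∪ B` is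
still preconnected: a separation of it, glued to the splitting of `Cᶜ`, would separate the
connected space `X`. Maximality of `C` then forces `B = ∅`.
-/

open Set

section

variable {X : Type*} [TopologicalSpace X]

theorem closure_connectedComponentIn_subset_union_compl (F : Set X) (y : X) :
    closure (connectedComponentIn F y) ⊆ connectedComponentIn F y ∪ Fᶜ := by
  intro z hzC
  by_cases hzF : z ∈ F
  swap
  · exact .inr hzF
  by_cases hy : y ∈ F
  swap
  · simp [connectedComponentIn_eq_empty hy] at hzC
  have hpre : IsPreconnected (insert z (connectedComponentIn F y)) :=
    isPreconnected_connectedComponentIn.subset_closure (subset_insert _ _)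
      (insert_subset hzC subset_closure)
  exact .inl <| hpre.subset_connectedComponentIn
    (mem_insert_of_mem _ (mem_connectedComponentIn hy))
    (insert_subset hzF (connectedComponentIn_subset F y)) (mem_insert z _)

theorem closure_eq_or_eq_union_singleton {s : Set X} {x : X} (h : closure s ⊆ s ∪ {x}) :
    closure s = s ∨ closure s = s ∪ {x} := by
  by_cases hx : x ∈ closure s
  · exact .inr (h.antisymm (union_subset subset_closure (singleton_subset_iff.2 hx)))
  · refine .inl (Subset.antisymm (fun z hz => ?_) subset_closure)
    exact (h hz).resolve_right fun (hzx : z = x) => hx (hzx ▸ hz)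

theorem IsPreconnected.union_compl_inter [PreconnectedSpace X] {C u v : Set X}
    (hC : IsPreconnected C) (hCne : C.Nonempty) (hu : IsOpen u) (hv : IsOpen v)
    (hcover : Cᶜ ⊆ u ∪ v) (hdisj : Cᶜ ∩ (u ∩ v) = ∅) : IsPreconnected (C ∪ Cᶜ ∩ v) := by
  rw [isPreconnected_iff_subset_of_disjoint]
  intro u' v' hu' hv' hcover' hdisj'
  wlog hCu' : C ⊆ u' generalizing u' v'
  · have hCv' : C ⊆ v' :=
      (isPreconnected_iff_subset_of_disjoint.1 hC u' v' hu' hv' (subset_union_left.trans hcover')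
        (subset_empty_iff.1 (hdisj' ▸ inter_subset_inter_left _ subset_union_left))).resolve_left
        hCu'
    exact (this v' u' hv' hu' (by rwa [union_comm v' u']) (by rwa [inter_comm v' u']) hCv').symm
  rw [← disjoint_iff_inter_eq_empty, disjoint_left] at hdisj hdisj'
  refine .inl (union_subset hCu' fun z hz => ?_)
  obtain ⟨c, hc⟩ := hCne
  have hUV : Disjoint (u ∪ u') (v ∩ v') := by
    refine disjoint_left.2 fun w hwU hwV => ?_
    by_cases hwC : w ∈ C
    · exact hdisj' (.inl hwC) ⟨hCu' hwC, hwV.2⟩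
    · rcases hwU with hwu | hwu'
      · exact hdisj hwC ⟨hwu, hwV.1⟩
      · exact hdisj' (.inr ⟨hwC, hwV.1⟩) ⟨hwu', hwV.2⟩
  have hcoverUV : univ ⊆ (u ∪ u') ∪ (v ∩ v') := by
    intro w _
    by_cases hwC : w ∈ C
    · exact .inl (.inr (hCu' hwC))
    · rcases hcover hwC with hwu | hwv
      · exact .inl (.inl hwu)
      · rcases hcover' (.inr ⟨hwC, hwv⟩) with hwu' | hwv'
        · exact .inl (.inr hwu')
        · exact .inr ⟨hwv, hwv'⟩
  have hU : univ ⊆ u ∪ u' :=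
    isPreconnected_univ.subset_left_of_subset_union (hu.union hu') (hv.inter hv') hUV hcoverUV
      ⟨c, mem_univ c, .inr (hCu' hc)⟩
  exact (hU (mem_univ z)).resolve_left fun hzu => hdisj hz.1 ⟨hzu, hz.2⟩

theorem isPreconnected_compl_connectedComponentIn_compl [PreconnectedSpace X] {A : Set X}
    (hA : IsPreconnected A) (y : X) : IsPreconnected (connectedComponentIn Aᶜ y)ᶜ := by
  by_cases hy : y ∈ Aᶜ
  swap
  · rw [connectedComponentIn_eq_empty hy, compl_empty]
    exact isPreconnected_univ
  set C := connectedComponentIn Aᶜ y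
  have hAC : A ⊆ Cᶜ := fun a ha haC => connectedComponentIn_subset _ _ haC ha
  rw [isPreconnected_iff_subset_of_disjoint]
  intro u v hu hv hcover hdisj
  wlog hAu : A ⊆ u generalizing u v
  · have hAv : A ⊆ v :=
      (isPreconnected_iff_subset_of_disjoint.1 hA u v hu hv (hAC.trans hcover)
        (subset_empty_iff.1 (hdisj ▸ inter_subset_inter_left _ hAC))).resolve_left hAu
    exact (this v u hv hu (by rwa [union_comm v u]) (by rwa [inter_comm v u]) hAv).symm
  have hBA : Cᶜ ∩ v ⊆ Aᶜ := fun w hw hwA =>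
    (disjoint_iff_inter_eq_empty.2 hdisj).notMem_of_mem_left hw.1 ⟨hAu hwA, hw.2⟩
  have hCB : C ∪ Cᶜ ∩ v ⊆ C :=
    (isPreconnected_connectedComponentIn.union_compl_inter ⟨y, mem_connectedComponentIn hy⟩
      hu hv hcover hdisj).subset_connectedComponentIn (.inl (mem_connectedComponentIn hy))
      (union_subset (connectedComponentIn_subset _ _) hBA)
  exact .inl fun z hzC => (hcover hzC).resolve_right fun hzv => hzC (hCB (.inr ⟨hzC, hzv⟩))

end

theorem stmt_16_general {X : Type*} [TopologicalSpace X] [ConnectedSpace X]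
    (x y : X) :
    IsConnected ((connectedComponentIn ({x}ᶜ : Set X) y)ᶜ : Set X) ∧
      (closure (connectedComponentIn ({x}ᶜ : Set X) y) =
          connectedComponentIn ({x}ᶜ : Set X) y ∨
        closure (connectedComponentIn ({x}ᶜ : Set X) y) =
          connectedComponentIn ({x}ᶜ : Set X) y ∪ {x}) := by
  have hxC : x ∉ connectedComponentIn {x}ᶜ y := fun h => connectedComponentIn_subset _ _ h rfl
  refine ⟨⟨⟨x, hxC⟩, isPreconnected_compl_connectedComponentIn_compl isPreconnected_singleton y⟩,
    closure_eq_or_eq_union_singleton ?_⟩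
  simpa only [compl_compl] using closure_connectedComponentIn_subset_union_compl {x}ᶜ y

/-- Let `X` be a connected space, `x ∈ X`, and `C` a connected component of `X \ {x}`.
Then `X \ C` is connected, and the closure of `C` equals `C` or `C ∪ {x}`. -/
theorem stmt_16 {X : Type*} [TopologicalSpace X] [ConnectedSpace X]
    (x y : X) (hy : y ≠ x) :
    IsConnected ((connectedComponentIn ({x}ᶜ : Set X) y)ᶜ : Set X) ∧
      (closure (connectedComponentIn ({x}ᶜ : Set X) y) =
          connectedComponentIn ({x}ᶜ : Set X) y ∨
        closure (connectedComponentIn ({x}ᶜ : Set X) y) =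
          connectedComponentIn ({x}ᶜ : Set X) y ∪ {x}) :=
  stmt_16_general x y
end

section
/- Let X be a Tychonoff cut-point space such that βX is a continuum irreducible between two points p and q. Then every indecomposable subcontinuum of βX is nowhere dense in βX. -/
/-!
Suppose the interior of `I` contains a point `y` of `X`. Cutting `X` at `y` into open sides `A`
and `B` writes `βX` as the union of the two subcontinua `cl (A ∪ {y})` and `cl (B ∪ {y})`, and
the interior of `I` meets the complement of each. This is impossible in a continuum irreducible
between `p` and `q`. If `p, q ∈ I`, then `I = βX` and the two pieces decompose it. If say
`q ∉ I`, let `K` be the piece containing `p` and `E` a continuum from `q` to `I` outside the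
interior of `I` (boundary bumping). Irreducibility forces `K` and `E` to be disjoint and the
open set `W = (K ∪ E)ᶜ` to lie in `I`; a continuum in `cl W` joining `K` to `E` (which exists
since `βX` is connected) is then a proper subcontinuum of `I` containing `W`, contradicting
indecomposability.
-/

open Set Topology

section Continuum

variable {Z : Type*} [TopologicalSpace Z]

def IsIrreducibleBetween (p q : Z) : Prop :=
  ∀ K : Set Z, IsClosed K → IsPreconnected K → p ∈ K → q ∈ K → K = univ

def IsIndecomposable (I : Set Z) : Prop :=
  ∀ J : Set Z, IsClosed J → IsPreconnected J → J ⊆ I → J ≠ I →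
    ∀ G : Set Z, IsOpen G → (G ∩ I).Nonempty → ¬ G ∩ I ⊆ J

theorem IsIrreducibleBetween.symm {p q : Z} (h : IsIrreducibleBetween p q) :
    IsIrreducibleBetween q p :=
  fun K hK hKc hq hp => h K hK hKc hp hq

/-- The "cut wire" theorem. -/
theorem IsClosed.exists_isClopen_of_forall_disjoint_connectedComponent [CompactSpace Z]
    [T2Space Z] {A B : Set Z} (hA : IsClosed A) (hB : IsClosed B)
    (h : ∀ a ∈ A, Disjoint (connectedComponent a) B) :
    ∃ C : Set Z, IsClopen C ∧ A ⊆ C ∧ Disjoint C B := by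
  have hπ : Continuous (ConnectedComponents.mk : Z → ConnectedComponents Z) :=
    ConnectedComponents.continuous_coe
  obtain ⟨C, hC, hAC, hCB⟩ := exists_clopen_of_closed_subset_open
    (hA.isCompact.image hπ).isClosed (hB.isCompact.image hπ).isClosed.isOpen_compl (by
      rintro _ ⟨a, ha, rfl⟩ ⟨b, hb, hba⟩
      exact (h a ha).ne_of_mem (ConnectedComponents.coe_eq_coe'.1 hba) hb rfl)
  exact ⟨_, hC.preimage hπ, image_subset_iff.1 hAC,
    disjoint_left.2 fun b hbC hb => hCB hbC ⟨b, hb, rfl⟩⟩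

theorem exists_isPreconnected_subset_inter_nonempty_of_union_eq_univ [CompactSpace Z] [T2Space Z]
    [PreconnectedSpace Z] {Y F₁ F₂ : Set Z} (hY : IsClosed Y) (hF₁ : IsClosed F₁)
    (hF₂ : IsClosed F₂) (hF : Disjoint F₁ F₂) (hcover : F₁ ∪ F₂ ∪ Y = univ)
    (hne₁ : F₁.Nonempty) (hne₂ : F₂.Nonempty) :
    ∃ J ⊆ Y, IsClosed J ∧ IsPreconnected J ∧
      (J ∩ F₁).Nonempty ∧ (J ∩ F₂).Nonempty := by
  by_contra! hJ
  have : CompactSpace Y := isCompact_iff_compactSpace.1 hY.isCompact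
  obtain ⟨C, hC, hFC, hCF⟩ := IsClosed.exists_isClopen_of_forall_disjoint_connectedComponent
    (hF₁.preimage continuous_subtype_val) (hF₂.preimage continuous_subtype_val) fun a ha => by
      have := hJ _ (image_subset_iff.2 fun x _ => x.2)
        (hY.isClosedMap_subtype_val _ isClosed_connectedComponent)
        (isPreconnected_connectedComponent.image _ continuous_subtype_val.continuousOn)
        ⟨a, ⟨a, mem_connectedComponent, rfl⟩, ha⟩
      exact disjoint_left.2 fun b hb hbF => this.subset ⟨⟨b, hb, rfl⟩, hbF⟩
  have hS₁ : IsClosed (F₁ ∪ (↑) '' C) :=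
    hF₁.union (hY.isClosedMap_subtype_val _ hC.isClosed)
  have hS₂ : IsClosed (F₂ ∪ (↑) '' Cᶜ) :=
    hF₂.union (hY.isClosedMap_subtype_val _ hC.compl.isClosed)
  have hS : univ ⊆ (F₁ ∪ (↑) '' C) ∪ (F₂ ∪ (↑) '' Cᶜ) := by
    intro x _
    rcases hcover.symm ▸ mem_univ x with (hx | hx) | hx
    · exact Or.inl (Or.inl hx)
    · exact Or.inr (Or.inl hx)
    · by_cases hxC : (⟨x, hx⟩ : Y) ∈ C
      exacts [Or.inl (Or.inr ⟨_, hxC, rfl⟩), Or.inr (Or.inr ⟨_, hxC, rfl⟩)]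
  have hS_disj : Disjoint (F₁ ∪ (↑) '' C) (F₂ ∪ (↑) '' Cᶜ) := by
    refine disjoint_union_left.2
      ⟨disjoint_union_right.2 ⟨hF, ?_⟩, disjoint_union_right.2 ⟨?_, ?_⟩⟩
    · exact disjoint_right.2 fun _ ⟨c, hc, hcx⟩ hcF => hc (hFC (hcx ▸ hcF :))
    · exact disjoint_left.2 fun _ ⟨c, hc, hcx⟩ hcF => hCF.ne_of_mem hc (hcx ▸ hcF :) rfl
    · exact (disjoint_image_iff Subtype.val_injective).2 disjoint_compl_right
  obtain ⟨x₁, hx₁⟩ := hne₁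
  obtain ⟨x₂, hx₂⟩ := hne₂
  rcases (isPreconnected_iff_subset_of_fully_disjoint_closed isClosed_univ).1
    isPreconnected_univ _ _ hS₁ hS₂ hS hS_disj with h | h
  · exact hS_disj.ne_of_mem (h (mem_univ x₂)) (Or.inl hx₂) rfl
  · exact hS_disj.ne_of_mem (Or.inl hx₁) (h (mem_univ x₁)) rfl

variable [CompactSpace Z] [T2Space Z] [PreconnectedSpace Z] {p q : Z} {I K L : Set Z}

theorem IsIrreducibleBetween.not_isIndecomposable_of_cover (hpq : IsIrreducibleBetween p q)
    (hIcl : IsClosed I) (hIco : IsPreconnected I) (hIne : I.Nonempty) (hq : q ∉ I)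
    (hK : IsClosed K) (hKco : IsPreconnected K) (hpK : p ∈ K) (hL : IsClosed L)
    (hKL : K ∪ L = univ) {s t : Z} (hs : s ∈ interior I \ L) (ht : t ∈ interior I \ K) :
    ¬ IsIndecomposable I := by
  intro hI
  have hsK : s ∈ K := (hKL.symm ▸ mem_univ s).resolve_right hs.2
  obtain ⟨E, hEI, hEcl, hEco, hqE, hEmeet⟩ :=
    exists_isPreconnected_subset_inter_nonempty_of_union_eq_univ (Y := closure Iᶜ)
      isClosed_closure isClosed_singleton hIcl
      (disjoint_singleton_left.2 hq) (univ_subset_iff.1 <| union_compl_self I ▸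
        union_subset_union subset_union_right subset_closure) ⟨q, rfl⟩ hIne
  rw [closure_compl] at hEI
  rw [inter_singleton_nonempty] at hqE
  have hKIE : K ∪ I ∪ E = univ := by
    obtain ⟨e, heE, heI⟩ := hEmeet
    refine hpq _ ((hK.union hIcl).union hEcl) ?_ (Or.inl (Or.inl hpK)) (Or.inr hqE)
    exact (hKco.union s hsK (interior_subset hs.1) hIco).union e (Or.inr heI) heE hEco
  have htE : t ∉ E := fun h => hEI h ht.1
  have hKE : Disjoint K E := by
    rw [disjoint_iff_forall_ne]
    rintro x hxK _ hxE rfl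
    have := hpq _ (hK.union hEcl) (hKco.union x hxK hxE hEco) (Or.inl hpK) (Or.inr hqE)
    exact (this.symm ▸ mem_univ t).elim ht.2 htE
  set W := (K ∪ E)ᶜ
  have hWI : W ⊆ I := compl_subset_iff_union.2 (by rwa [union_right_comm] at hKIE)
  have htW : t ∈ W := by simp [W, ht.2, htE]
  have hYI : closure W ⊆ I := closure_minimal hWI hIcl
  have hYL : closure W ⊆ L :=
    closure_minimal ((compl_subset_compl.2 subset_union_left).trans
      (compl_subset_iff_union.2 hKL)) hL
  obtain ⟨J, hJY, hJcl, hJco, ⟨k, hkJ, hkK⟩, ⟨e, heJ, heE⟩⟩ :=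
    exists_isPreconnected_subset_inter_nonempty_of_union_eq_univ isClosed_closure hK hEcl hKE
      (univ_subset_iff.1 <| union_compl_self (K ∪ E) ▸
        union_subset_union_right _ subset_closure) ⟨p, hpK⟩ ⟨q, hqE⟩
  have hWJ : W ⊆ J := by
    have := hpq _ ((hJcl.union hK).union hEcl)
      ((hJco.union k hkJ hkK hKco).union e (Or.inl heJ) heE hEco)
      (Or.inl (Or.inr hpK)) (Or.inr hqE)
    rw [union_assoc, union_comm] at this
    exact compl_subset_iff_union.2 this
  exact hI J hJcl hJco (hJY.trans hYI) (fun h => hs.2 (hYL (hJY (h ▸ interior_subset hs.1))))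
    W (hK.union hEcl).isOpen_compl ⟨t, htW, hWI htW⟩ fun x hx => hWJ hx.1

theorem IsIrreducibleBetween.interior_subset_or_of_union_eq_univ
    (hpq : IsIrreducibleBetween p q) (hIcl : IsClosed I) (hIco : IsPreconnected I)
    (hIne : I.Nonempty) (hI : IsIndecomposable I)
    (hK : IsClosed K) (hKco : IsPreconnected K) (hL : IsClosed L) (hLco : IsPreconnected L)
    (hKL : K ∪ L = univ) : interior I ⊆ K ∨ interior I ⊆ L := by
  by_contra! h
  obtain ⟨t, htI, htK⟩ := not_subset.1 h.1
  obtain ⟨s, hsI, hsL⟩ := not_subset.1 h.2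
  have key : ∀ {p q : Z}, IsIrreducibleBetween p q → q ∉ I → False := fun {p _} hpq hq => by
    rcases hKL.symm ▸ mem_univ p with hp | hp
    · exact hpq.not_isIndecomposable_of_cover hIcl hIco hIne hq hK hKco hp hL hKL
        ⟨hsI, hsL⟩ ⟨htI, htK⟩ hI
    · exact hpq.not_isIndecomposable_of_cover hIcl hIco hIne hq hL hLco hp hK
        (union_comm K L ▸ hKL) ⟨htI, htK⟩ ⟨hsI, hsL⟩ hI
  by_cases hq : q ∈ I
  · by_cases hp : p ∈ I
    · have hIuniv := hpq I hIcl hIco hp hq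
      exact hI K hK hKco (hIuniv ▸ subset_univ K) (fun h => htK (h ▸ interior_subset htI))
        Lᶜ hL.isOpen_compl ⟨s, hsL, interior_subset hsI⟩
        (inter_subset_left.trans (compl_subset_iff_union.2 (union_comm K L ▸ hKL)))
    · exact key hpq.symm hp
  · exact key hpq hq

end Continuum

theorem Set.compl_eq_insert_of_union_eq_compl_singleton {α : Type*} {y : α} {A B : Set α}
    (hAB : Disjoint A B) (hunion : A ∪ B = {y}ᶜ) : Bᶜ = insert y A := by
  ext x
  have hx := hunion ▸ mem_union x A B
  have hx' := @disjoint_left.1 hAB x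
  simp only [mem_compl_iff, mem_singleton_iff, mem_insert_iff] at hx ⊢
  tauto

section CutPoint

variable {X : Type*} [TopologicalSpace X]

theorem exists_open_partition_of_not_isPreconnected_compl_singleton [T1Space X] {y : X}
    (h : ¬ IsPreconnected ({y}ᶜ : Set X)) :
    ∃ A B : Set X, IsOpen A ∧ IsOpen B ∧ Disjoint A B ∧ A ∪ B = {y}ᶜ ∧
      A.Nonempty ∧ B.Nonempty := by
  simp only [IsPreconnected, not_forall, not_nonempty_iff_eq_empty] at h
  obtain ⟨u, v, hu, hv, hcover, hu', hv', huv⟩ := h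
  refine ⟨{y}ᶜ ∩ u, {y}ᶜ ∩ v, isOpen_compl_singleton.inter hu,
    isOpen_compl_singleton.inter hv, ?_, ?_, hu', hv'⟩
  · rw [disjoint_iff_inter_eq_empty, ← inter_inter_distrib_left, huv]
  · rw [← inter_union_distrib_left, inter_eq_left.2 hcover]

variable [PreconnectedSpace X] {y : X} {A B : Set X}

theorem IsOpen.mem_closure_of_isClosed_insert (hA : IsOpen A) (hAne : A.Nonempty)
    (h : IsClosed (insert y A)) : y ∈ closure A := by
  by_contra hy
  have hAcl : closure A ⊆ A := fun x hx =>
    (closure_minimal (subset_insert y A) h hx).resolve_left (by rintro rfl; exact hy hx)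
  have hAuniv := IsClopen.eq_univ ⟨closure_subset_iff_isClosed.1 hAcl, hA⟩ hAne
  exact hy (subset_closure (hAuniv ▸ mem_univ y))

theorem IsOpen.isPreconnected_insert_of_isClosed (hA : IsOpen A) (h : IsClosed (insert y A)) :
    IsPreconnected (insert y A) := by
  rw [isPreconnected_iff_subset_of_fully_disjoint_closed h]
  intro u v hu hv hcover huv
  wlog hyu : y ∈ u generalizing u v
  · exact (this v u hv hu (union_comm u v ▸ hcover) huv.symm
      ((hcover (mem_insert y A)).resolve_left hyu)).symm
  have hAu : A \ u = insert y A ∩ v := by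
    ext x
    have hx := @hcover x
    have hx' := @disjoint_left.1 huv x
    simp only [mem_sdiff, mem_inter_iff, mem_insert_iff, mem_union] at hx hx' ⊢
    grind
  have hAu_empty : A \ u = ∅ :=
    (isClopen_iff.1 ⟨hAu ▸ h.inter hv, hA.sdiff hu⟩).resolve_right
      fun hAu_univ => (hAu_univ.symm ▸ mem_univ y : y ∈ A \ u).2 hyu
  exact Or.inl (insert_subset hyu (sdiff_eq_empty.1 hAu_empty))

end CutPoint

theorem not_subset_closure_image_stoneCechUnit_compl {X : Type*} [TopologicalSpace X]
    [CompletelyRegularSpace X] {A : Set X} (hA : IsOpen A) {y : X} (hy : y ∈ closure A)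
    {U : Set (StoneCech X)} (hU : IsOpen U) (hyU : stoneCechUnit y ∈ U) :
    ¬ U ⊆ closure (stoneCechUnit '' Aᶜ) := by
  intro hUA
  obtain ⟨_, hxU, a, haA, rfl⟩ := mem_closure_iff.1
    (image_closure_subset_closure_image continuous_stoneCechUnit ⟨y, hy, rfl⟩) U hU hyU
  have : a ∈ closure Aᶜ := by
    rw [isInducing_stoneCechUnit.closure_eq_preimage_closure_image]
    exact hUA hxU
  exact (hA.isClosed_compl.closure_eq ▸ this) haA

/-- Let `X` be a Tychonoff cut-point space such that `βX` is irreducible between `p` and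
`q`.  Then every indecomposable subcontinuum of `βX` is nowhere dense in `βX`. -/
theorem stmt_17 {X : Type*} [TopologicalSpace X] [T35Space X] [ConnectedSpace X]
    (hcut : ∀ x : X, ¬ IsPreconnected ({x}ᶜ : Set X))
    (p q : StoneCech X)
    (hirr : ∀ K : Set (StoneCech X),
      IsClosed K → IsPreconnected K → p ∈ K → q ∈ K → K = Set.univ)
    (I : Set (StoneCech X)) (hIcl : IsClosed I) (hIco : IsPreconnected I) (hIne : I.Nonempty)
    (hindec : ∀ J : Set (StoneCech X), IsClosed J → IsPreconnected J → J ⊆ I → J ≠ I →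
      ∀ G : Set (StoneCech X), IsOpen G → (G ∩ I).Nonempty → ¬ (G ∩ I ⊆ J)) :
    interior I = ∅ := by
  have : PreconnectedSpace (StoneCech X) :=
    denseRange_stoneCechUnit.preconnectedSpace continuous_stoneCechUnit
  by_contra hI
  obtain ⟨y, hy⟩ := denseRange_stoneCechUnit.exists_mem_open isOpen_interior
    (nonempty_iff_ne_empty.2 hI)
  obtain ⟨A, B, hA, hB, hAB, hunion, hAne, hBne⟩ :=
    exists_open_partition_of_not_isPreconnected_compl_singleton (hcut y)
  have hBc := compl_eq_insert_of_union_eq_compl_singleton hAB hunion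
  have hAc := compl_eq_insert_of_union_eq_compl_singleton hAB.symm (union_comm A B ▸ hunion)
  have hcover : closure (stoneCechUnit '' Bᶜ) ∪ closure (stoneCechUnit '' Aᶜ) = univ := by
    rw [← closure_union, ← image_union, ← compl_inter, hAB.symm.inter_eq, compl_empty,
      image_univ, denseRange_stoneCechUnit.closure_range]
  have hpiece : ∀ {S : Set X}, IsPreconnected S →
      IsPreconnected (closure (stoneCechUnit '' S)) := fun hS =>
    (hS.image _ continuous_stoneCechUnit.continuousOn).closure
  rcases IsIrreducibleBetween.interior_subset_or_of_union_eq_univ hirr hIcl hIco hIne hindec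
      isClosed_closure
      (hpiece (hBc ▸ hA.isPreconnected_insert_of_isClosed (hBc ▸ hB.isClosed_compl)))
      isClosed_closure
      (hpiece (hAc ▸ hB.isPreconnected_insert_of_isClosed (hAc ▸ hA.isClosed_compl)))
      hcover with h | h
  · exact not_subset_closure_image_stoneCechUnit_compl hB
      (hB.mem_closure_of_isClosed_insert hBne (hAc ▸ hA.isClosed_compl)) isOpen_interior hy h
  · exact not_subset_closure_image_stoneCechUnit_compl hA
      (hA.mem_closure_of_isClosed_insert hAne (hBc ▸ hB.isClosed_compl)) isOpen_interior hy h
end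

section
/- Let X be a compact connected topological space with more than one point. Then X has at least two non-cut points, i.e., there are two distinct points x, y such that X \ {x} and X \ {y} are both connected. -/
/-!
Let `x` be a cut point, so that `{x}ᶜ` splits into two nonempty relatively clopen pieces `A` and
`B`. In a connected space the complement of such a piece, here `B ∪ {x} = Aᶜ`, is connected. If
every point `a ∈ A` were a cut point, we could choose a piece `V a` of `{a}ᶜ` avoiding `x`;
connectedness of `Aᶜ` and of `(V a)ᶜ` give `V a ⊆ A` and `V b ⊆ V a` for `b ∈ V a`, with
`b ∉ V b`. By compactness and Zorn's lemma some `closure (V a)` is minimal among these closed sets,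
while two steps down the nesting, from `a` to `b ∈ V a` to `c ∈ V b`, give a strictly smaller one.
Hence `A`, and likewise `B`, contains a non-cut point.
-/

open Set Topology
open scoped Set.Notation

section

variable {X : Type*} [TopologicalSpace X]

theorem exists_isClopen_preimage_val_of_not_isPreconnected {Y : Set X} (hY : ¬IsPreconnected Y)
    {x : X} (hx : x ∈ Y) : ∃ V ⊆ Y, IsClopen (Y ↓∩ V) ∧ V.Nonempty ∧ x ∉ V := by
  rw [isPreconnected_iff_preconnectedSpace, preconnectedSpace_iff_clopen] at hY
  push Not at hY
  obtain ⟨s, hs, hs_ne, hs_ne_univ⟩ := hY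
  have key : ∀ t : Set Y, IsClopen t → t.Nonempty → ⟨x, hx⟩ ∉ t →
      ∃ V ⊆ Y, IsClopen (Y ↓∩ V) ∧ V.Nonempty ∧ x ∉ V := by
    intro t ht ht_ne hxt
    refine ⟨(↑) '' t, by simp, ?_, ht_ne.image _, ?_⟩
    · rwa [preimage_image_eq _ Subtype.val_injective]
    · rintro ⟨y, hy, rfl⟩
      exact hxt hy
  by_cases hxs : ⟨x, hx⟩ ∈ s
  · exact key sᶜ hs.compl (nonempty_compl.2 hs_ne_univ) (not_not_intro hxs)
  · exact key s hs hs_ne hxs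

theorem IsPreconnected.disjoint_or_subset_of_isClopen_preimage_val {Y P V : Set X}
    (hP : IsPreconnected P) (hPY : P ⊆ Y) (hV : IsClopen (Y ↓∩ V)) : Disjoint P V ∨ P ⊆ V := by
  have hP' : IsPreconnected (Y ↓∩ P) := by
    rwa [← IsInducing.subtypeVal.isPreconnected_image,
      image_preimage_eq_of_subset (by rwa [Subtype.range_coe])]
  refine (disjoint_or_subset_of_isClopen hP' hV).imp (fun h => ?_) (fun h z hz => ?_)
  · exact disjoint_left.2 fun z hzP hzV =>
      disjoint_left.1 h (show (⟨z, hPY hzP⟩ : Y) ∈ Y ↓∩ P from hzP) hzV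
  · exact h (show (⟨z, hPY hz⟩ : Y) ∈ Y ↓∩ P from hz)

theorem closure_subset_insert_of_isClosed_preimage_val {a : X} {V : Set X} (hVa : V ⊆ {a}ᶜ)
    (hV : IsClosed (({a}ᶜ : Set X) ↓∩ V)) : closure V ⊆ insert a V := by
  intro z hz
  by_cases hza : z = a
  · exact Or.inl hza
  · exact Or.inr (isClosed_preimage_val.1 hV ⟨hza, by rwa [inter_eq_self_of_subset_right hVa]⟩)

theorem IsPreconnected.isPreconnected_compl_of_isClopen_preimage_val [PreconnectedSpace X]
    {C V : Set X} (hC : IsPreconnected C) (hVC : V ⊆ Cᶜ) (hV : IsClopen (Cᶜ ↓∩ V)) :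
    IsPreconnected Vᶜ := by
  obtain ⟨u, hu, huV⟩ := isOpen_induced_iff.1 hV.isOpen
  obtain ⟨w, hw, hwV⟩ := isClosed_induced_iff.1 hV.isClosed
  have hu' : ∀ z ∉ C, z ∈ u ↔ z ∈ V := fun z hz => Set.ext_iff.1 huV ⟨z, hz⟩
  have hw' : ∀ z ∉ C, z ∈ w ↔ z ∈ V := fun z hz => Set.ext_iff.1 hwV ⟨z, hz⟩
  rw [isPreconnected_iff_subset_of_disjoint]
  intro p q hp hq hpq hdisj
  have hpq' : ∀ z ∉ V, z ∈ p → z ∉ q := fun z hz hzp hzq => hdisj.subset ⟨hz, hzp, hzq⟩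
  have hCV : C ⊆ Vᶜ := fun z hz hzV => hVC hzV hz
  wlog hCp : C ⊆ p generalizing p q
  · have hCq : C ⊆ q :=
      ((isPreconnected_iff_subset_of_disjoint.1 hC) p q hp hq (hCV.trans hpq)
        (subset_empty_iff.1 <| hdisj ▸ inter_subset_inter_left _ hCV)).resolve_left hCp
    exact (this q p hq hp (union_comm p q ▸ hpq) (inter_comm p q ▸ hdisj)
      (fun z hz hzq hzp => hpq' z hz hzp hzq) hCq).symm
  -- Off `C` the closed set `w` agrees with `V`, so `q \ w` is the part of `Vᶜ` lying in `q`.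
  have hW : q \ w = (u ∪ p)ᶜ := by
    ext z
    simp only [mem_sdiff, mem_compl_iff, mem_union, not_or]
    constructor
    · rintro ⟨hzq, hzw⟩
      have hzC : z ∉ C := fun hzC => hpq' z (hCV hzC) (hCp hzC) hzq
      have hzV : z ∉ V := (hw' z hzC).not.1 hzw
      exact ⟨(hu' z hzC).not.2 hzV, fun hzp => hpq' z hzV hzp hzq⟩
    · rintro ⟨hzu, hzp⟩
      have hzC : z ∉ C := fun hzC => hzp (hCp hzC)
      have hzV : z ∉ V := (hu' z hzC).not.1 hzu
      exact ⟨(hpq hzV).resolve_left hzp, (hw' z hzC).not.2 hzV⟩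
  have hW_clopen : IsClopen (q \ w) := ⟨hW ▸ (hu.union hp).isClosed_compl, hq.sdiff hw⟩
  rcases isClopen_iff.1 hW_clopen with hW_empty | hW_univ
  · refine Or.inl fun z hzV => by_contra fun hzp => ?_
    have hzu : z ∈ (u ∪ p)ᶜ := by
      have hzC : z ∉ C := fun hzC => hzp (hCp hzC)
      simpa [(hu' z hzC).not.2 hzV] using hzp
    rw [← hW, hW_empty] at hzu
    exact hzu
  · exact Or.inr fun z _ => (hW_univ.symm ▸ mem_univ z : z ∈ q \ w).1

theorem exists_forall_subset_imp_subset_of_isClosed [CompactSpace X] {A : Set X}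
    (hA : A.Nonempty) {K : X → Set X} (hK_closed : ∀ a ∈ A, IsClosed (K a))
    (hK_ne : ∀ a ∈ A, (K a).Nonempty) (hKA : ∀ a ∈ A, K a ⊆ A)
    (hK : ∀ a ∈ A, ∀ b ∈ K a, K b ⊆ K a) : ∃ a ∈ A, ∀ b ∈ A, K b ⊆ K a → K a ⊆ K b := by
  have hchain : ∀ c ⊆ K '' A, IsChain (· ⊆ ·) c → c.Nonempty → ∃ lb ∈ K '' A, ∀ s ∈ c, lb ⊆ s := by
    rintro c hcK hc ⟨s₀, hs₀⟩
    have : Nonempty c := ⟨⟨s₀, hs₀⟩⟩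
    have hc_prop : ∀ s ∈ c, IsClosed s ∧ s.Nonempty := fun s hs => by
      obtain ⟨a, ha, rfl⟩ := hcK hs
      exact ⟨hK_closed a ha, hK_ne a ha⟩
    obtain ⟨b, hb⟩ := IsCompact.nonempty_sInter_of_directed_nonempty_isCompact_isClosed
      (show IsChain (· ⊇ ·) c from hc.symm).directedOn (fun s hs => (hc_prop s hs).2)
      (fun s hs => (hc_prop s hs).1.isCompact) (fun s hs => (hc_prop s hs).1)
    obtain ⟨a₁, ha₁, rfl⟩ := hcK hs₀
    refine ⟨K b, ⟨b, hKA a₁ ha₁ (hb _ hs₀), rfl⟩, fun s hs => ?_⟩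
    obtain ⟨a, ha, rfl⟩ := hcK hs
    exact hK a ha b (hb _ hs)
  obtain ⟨a₀, ha₀⟩ := hA
  obtain ⟨_, -, ⟨a, ha, rfl⟩, hmin⟩ := zorn_superset_nonempty (K '' A) hchain (K a₀) ⟨a₀, ha₀, rfl⟩
  exact ⟨a, ha, fun b hb hba => hmin ⟨b, hb, rfl⟩ hba⟩

theorem exists_mem_isPreconnected_compl_singleton [CompactSpace X] [PreconnectedSpace X]
    {A : Set X} (hA : A.Nonempty) (hAc : IsPreconnected Aᶜ) {x : X} (hx : x ∉ A) :
    ∃ a ∈ A, IsPreconnected ({a}ᶜ : Set X) := by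
  by_contra! hcut
  have hside : ∀ a ∈ A, ∃ V ⊆ ({a}ᶜ : Set X),
      IsClopen (({a}ᶜ : Set X) ↓∩ V) ∧ V.Nonempty ∧ x ∉ V := fun a ha =>
    exists_isClopen_preimage_val_of_not_isPreconnected (hcut a ha)
      (mem_compl_singleton_iff.2 fun h => hx (h ▸ ha))
  choose! V hVa hV hV_ne hxV using hside
  have hVA : ∀ a ∈ A, V a ⊆ A := by
    intro a ha
    have hAV := (hAc.disjoint_or_subset_of_isClopen_preimage_val (by simpa using ha)
      (hV a ha)).resolve_right fun h => hxV a ha (h hx)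
    exact compl_subset_compl.1 hAV.subset_compl_right
  have hVV : ∀ a ∈ A, ∀ b ∈ V a, V b ⊆ V a := by
    intro a ha b hb
    have hbA := hVA a ha hb
    have hVc := isPreconnected_singleton.isPreconnected_compl_of_isClopen_preimage_val
      (hVa a ha) (hV a ha)
    have hVV := (hVc.disjoint_or_subset_of_isClopen_preimage_val (by simpa using hb)
      (hV b hbA)).resolve_right fun h => hxV b hbA (h (hxV a ha))
    exact compl_subset_compl.1 hVV.subset_compl_right
  have hcl : ∀ a ∈ A, closure (V a) ⊆ insert a (V a) := fun a ha =>
    closure_subset_insert_of_isClosed_preimage_val (hVa a ha) (hV a ha).isClosed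
  obtain ⟨a, ha, hmin⟩ := exists_forall_subset_imp_subset_of_isClosed hA
    (K := fun a => closure (V a)) (fun _ _ => isClosed_closure)
    (fun a ha => (hV_ne a ha).closure)
    (fun a ha => (hcl a ha).trans (insert_subset ha (hVA a ha)))
    (fun a ha b hb => by
      rcases hcl a ha hb with rfl | hb
      exacts [subset_rfl, closure_mono (hVV a ha b hb)])
  obtain ⟨b, hb⟩ := hV_ne a ha
  have hbA := hVA a ha hb
  obtain ⟨c, hc⟩ := hV_ne b hbA
  have hcA := hVA b hbA hc
  have hca : closure (V c) ⊆ closure (V a) :=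
    (closure_mono (hVV b hbA c hc)).trans (closure_mono (hVV a ha b hb))
  have hbc : b ∈ closure (V c) := hmin c hcA hca (subset_closure hb)
  have hcb : insert c (V c) ⊆ V b := insert_subset hc (hVV b hbA c hc)
  exact hVa b hbA (hcb (hcl c hcA hbc)) rfl

end

/-- Every compact connected topological space with more than one point has at least two
non-cut points. -/
theorem stmt_19 {X : Type*} [TopologicalSpace X] [CompactSpace X] [ConnectedSpace X]
    [Nontrivial X] :
    ∃ x y : X, x ≠ y ∧ IsPreconnected ({x}ᶜ : Set X) ∧ IsPreconnected ({y}ᶜ : Set X) := by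
  by_cases h : ∀ x : X, IsPreconnected ({x}ᶜ : Set X)
  · obtain ⟨x, y, hxy⟩ := exists_pair_ne X
    exact ⟨x, y, hxy, h x, h y⟩
  obtain ⟨x, hx⟩ := not_forall.1 h
  obtain ⟨y, hy⟩ := exists_ne x
  obtain ⟨V, hVx, hV, hV_ne, hyV⟩ := exists_isClopen_preimage_val_of_not_isPreconnected hx hy
  have hW : IsClopen (({x}ᶜ : Set X) ↓∩ ({x}ᶜ \ V)) := by
    rw [preimage_sdiff, Subtype.coe_preimage_self, ← compl_eq_univ_sdiff]
    exact hV.compl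
  obtain ⟨a, haV, ha⟩ := exists_mem_isPreconnected_compl_singleton hV_ne
    (isPreconnected_singleton.isPreconnected_compl_of_isClopen_preimage_val hVx hV)
    (fun h => hVx h rfl)
  obtain ⟨b, hbW, hb⟩ := exists_mem_isPreconnected_compl_singleton (A := {x}ᶜ \ V) ⟨y, hy, hyV⟩
    (isPreconnected_singleton.isPreconnected_compl_of_isClopen_preimage_val sdiff_subset hW)
    (fun h => h.1 rfl)
  exact ⟨a, b, fun hab => hbW.2 (hab ▸ haV), ha, hb⟩
end
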